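/- arXiv:2410.15003 — 6 statements merged into one kernel-verified Lean document; each statement's English description precedes it below -/
import Mathlib

section
/- Let V be a nonempty finite subset of ℝⁿ, let K be the convex hull of V, and let f : ℝⁿ → ℝ be a linear functional. Suppose y* ∈ K satisfies f(y) < f(y*) for every y ∈ K with y ≠ y* (i.e., y* is the unique maximizer of f over K). Then there exists a constant σ > 0 such that f(y*) − f(y) ≥ σ·‖y* − y‖_∞ for every y ∈ K. -/
/-- If `ystar` is the unique maximizer of a linear functional `f` over the convex hull `K`
of a nonempty finite set `V ⊆ ℝⁿ` (with the sup norm), then there is `σ > 0` with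
`f ystar - f y ≥ σ * ‖ystar - y‖` for all `y ∈ K`. -/
theorem stmt0 (n : ℕ) (V : Finset (Fin n → ℝ)) (hV : V.Nonempty)
    (f : (Fin n → ℝ) →ₗ[ℝ] ℝ) (ystar : Fin n → ℝ)
    (hyK : ystar ∈ convexHull ℝ (V : Set (Fin n → ℝ)))
    (hmax : ∀ y ∈ convexHull ℝ (V : Set (Fin n → ℝ)), y ≠ ystar → f y < f ystar) :
    ∃ σ : ℝ, 0 < σ ∧ ∀ y ∈ convexHull ℝ (V : Set (Fin n → ℝ)),
      σ * ‖ystar - y‖ ≤ f ystar - f y := by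
  classical
  by_cases hall : ∀ v ∈ V, v = ystar
  · refine ⟨1, one_pos, ?_⟩
    have hK : (V : Set (Fin n → ℝ)) ⊆ {ystar} := by intro v hv; exact hall v hv
    have hsub : convexHull ℝ (V : Set (Fin n → ℝ)) ⊆ {ystar} :=
      convexHull_min hK (convex_singleton _)
    intro y hy
    have : y = ystar := hsub hy
    subst this
    simp
  · push_neg at hall
    obtain ⟨v0, hv0, hv0ne⟩ := hall
    set W := V.filter (fun v => v ≠ ystar) with hW
    have hWne : W.Nonempty := ⟨v0, by simp [hW, hv0, hv0ne]⟩
    set σ := W.inf' hWne (fun v => (f ystar - f v) / ‖ystar - v‖) with hσ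
    have hσpos : 0 < σ := by
      rw [hσ, Finset.lt_inf'_iff]
      intro v hv
      simp only [hW, Finset.mem_filter] at hv
      have hvK : v ∈ convexHull ℝ (V : Set (Fin n → ℝ)) :=
        subset_convexHull ℝ _ hv.1
      have hlt : f v < f ystar := hmax v hvK hv.2
      have hnorm : 0 < ‖ystar - v‖ := by
        rw [norm_pos_iff, sub_ne_zero]; exact fun h => hv.2 h.symm
      exact div_pos (by linarith) hnorm
    refine ⟨σ, hσpos, ?_⟩
    have hvert : ∀ v ∈ (V : Set (Fin n → ℝ)), σ * ‖ystar - v‖ ≤ f ystar - f v := by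
      intro v hv
      by_cases hveq : v = ystar
      · subst hveq; simp
      · have hmem : v ∈ W := Finset.mem_filter.mpr ⟨hv, hveq⟩
        have h1 : σ ≤ (f ystar - f v) / ‖ystar - v‖ := Finset.inf'_le _ hmem
        have hnorm : 0 < ‖ystar - v‖ := by
          rw [norm_pos_iff, sub_ne_zero]; exact fun h => hveq h.symm
        calc σ * ‖ystar - v‖ ≤ ((f ystar - f v) / ‖ystar - v‖) * ‖ystar - v‖ :=
              mul_le_mul_of_nonneg_right h1 hnorm.le
          _ = f ystar - f v := div_mul_cancel₀ _ hnorm.ne'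
    have hS : Convex ℝ {y : Fin n → ℝ | σ * ‖ystar - y‖ ≤ f ystar - f y} := by
      intro y hy z hz a b ha hb hab
      simp only [Set.mem_setOf_eq] at hy hz ⊢
      have key : ystar - (a • y + b • z) = a • (ystar - y) + b • (ystar - z) := by
        calc ystar - (a • y + b • z) = (a + b) • ystar - (a • y + b • z) := by
              rw [hab, one_smul]
          _ = a • (ystar - y) + b • (ystar - z) := by
              rw [add_smul, smul_sub, smul_sub]; abel
      calc σ * ‖ystar - (a • y + b • z)‖
          ≤ σ * (a * ‖ystar - y‖ + b * ‖ystar - z‖) := by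
            apply mul_le_mul_of_nonneg_left _ hσpos.le
            rw [key]
            calc ‖a • (ystar - y) + b • (ystar - z)‖
                ≤ ‖a • (ystar - y)‖ + ‖b • (ystar - z)‖ := norm_add_le _ _
              _ = a * ‖ystar - y‖ + b * ‖ystar - z‖ := by
                  rw [norm_smul, norm_smul, Real.norm_of_nonneg ha, Real.norm_of_nonneg hb]
        _ = a * (σ * ‖ystar - y‖) + b * (σ * ‖ystar - z‖) := by ring
        _ ≤ a * (f ystar - f y) + b * (f ystar - f z) :=
            add_le_add (mul_le_mul_of_nonneg_left hy ha) (mul_le_mul_of_nonneg_left hz hb)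
        _ = f ystar - f (a • y + b • z) := by
            simp only [map_add, map_smul, smul_eq_mul]
            linear_combination (f ystar) * hab
    intro y hy
    exact convexHull_min hvert hS hy
end

section
/- Let V be a finite subset of ℝⁿ containing at least two distinct points, let K be the convex hull of V, and let f : ℝⁿ → ℝ be a linear functional. Suppose y* ∈ V satisfies f(v) ≤ f(y*) for every v ∈ V. Then the infimum over y ∈ K with y ≠ y* of the ratio (f(y*) − f(y))/‖y* − y‖_∞ equals the minimum over v ∈ V with v ≠ y* of (f(y*) − f(v))/‖y* − v‖_∞. -/
/-- For a linear functional maximized at `ystar ∈ V` over the convex hull of the finite set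
`V` (with at least two points), the infimum of `(f ystar - f y)/‖ystar - y‖` over
`y ∈ convexHull V`, `y ≠ ystar`, equals the minimum of the same ratio over `v ∈ V`,
`v ≠ ystar`. -/
theorem stmt1 (n : ℕ) (V : Finset (Fin n → ℝ)) (hcard : 2 ≤ V.card)
    (f : (Fin n → ℝ) →ₗ[ℝ] ℝ) (ystar : Fin n → ℝ) (hy : ystar ∈ V)
    (hopt : ∀ v ∈ V, f v ≤ f ystar)
    (hne : (V.erase ystar).Nonempty) :
    sInf {r : ℝ | ∃ y ∈ convexHull ℝ (V : Set (Fin n → ℝ)), y ≠ ystar ∧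
        r = (f ystar - f y) / ‖ystar - y‖}
      = (V.erase ystar).inf' hne (fun v => (f ystar - f v) / ‖ystar - v‖) := by
  have hnorm_pos : ∀ v : Fin n → ℝ, v ≠ ystar → (0:ℝ) < ‖ystar - v‖ := fun v hv => by
    rw [norm_pos_iff, sub_ne_zero]; exact fun h => hv h.symm
  set m := (V.erase ystar).inf' hne (fun v => (f ystar - f v) / ‖ystar - v‖) with hmdef
  have hm0 : 0 ≤ m := by
    apply Finset.le_inf'
    intro v hv
    exact div_nonneg (sub_nonneg.2 (hopt v (Finset.mem_of_mem_erase hv)))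
      (hnorm_pos v (Finset.ne_of_mem_erase hv)).le
  have key : ∀ v ∈ V, m * ‖ystar - v‖ ≤ f ystar - f v := by
    intro v hv
    by_cases h : v = ystar
    · subst h; simp
    · have hp := hnorm_pos v h
      have hle : m ≤ (f ystar - f v) / ‖ystar - v‖ :=
        Finset.inf'_le _ (Finset.mem_erase.2 ⟨h, hv⟩)
      calc m * ‖ystar - v‖ ≤ ((f ystar - f v) / ‖ystar - v‖) * ‖ystar - v‖ :=
            mul_le_mul_of_nonneg_right hle hp.le
        _ = f ystar - f v := div_mul_cancel₀ _ hp.ne'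
  have lb : ∀ r ∈ {r : ℝ | ∃ y ∈ convexHull ℝ (V : Set (Fin n → ℝ)), y ≠ ystar ∧
      r = (f ystar - f y) / ‖ystar - y‖}, m ≤ r := by
    rintro r ⟨y, hyK, hyne, rfl⟩
    rw [Finset.convexHull_eq] at hyK
    obtain ⟨w, hw0, hw1, hwy⟩ := hyK
    have hy_eq : y = ∑ v ∈ V, w v • v := by
      rw [← hwy, Finset.centerMass_eq_of_sum_1 _ _ hw1]; rfl
    have hfy : f y = ∑ v ∈ V, w v * f v := by
      rw [hy_eq, map_sum]; simp [map_smul]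
    have hsub : ystar - y = ∑ v ∈ V, w v • (ystar - v) := by
      rw [hy_eq]
      simp [smul_sub, Finset.sum_sub_distrib, ← Finset.sum_smul, hw1]
    have hnle : ‖ystar - y‖ ≤ ∑ v ∈ V, w v * ‖ystar - v‖ := by
      rw [hsub]
      refine (norm_sum_le _ _).trans (le_of_eq ?_)
      refine Finset.sum_congr rfl fun v hv => ?_
      rw [norm_smul, Real.norm_eq_abs, abs_of_nonneg (hw0 v hv)]
    have hmain : m * ‖ystar - y‖ ≤ f ystar - f y := by
      calc m * ‖ystar - y‖ ≤ m * ∑ v ∈ V, w v * ‖ystar - v‖ :=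
            mul_le_mul_of_nonneg_left hnle hm0
        _ = ∑ v ∈ V, w v * (m * ‖ystar - v‖) := by
            rw [Finset.mul_sum]; exact Finset.sum_congr rfl fun v _ => by ring
        _ ≤ ∑ v ∈ V, w v * (f ystar - f v) :=
            Finset.sum_le_sum fun v hv => mul_le_mul_of_nonneg_left (key v hv) (hw0 v hv)
        _ = f ystar - f y := by
            rw [hfy]
            rw [Finset.sum_congr rfl (fun v _ => mul_sub (w v) _ _), Finset.sum_sub_distrib,
              ← Finset.sum_mul, hw1, one_mul]
    rw [le_div_iff₀ (hnorm_pos y hyne)]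
    exact hmain
  apply le_antisymm
  · obtain ⟨v0, hv0, hv0eq⟩ := Finset.exists_mem_eq_inf' hne
      (fun v => (f ystar - f v) / ‖ystar - v‖)
    rw [hmdef, hv0eq]
    apply csInf_le ⟨m, lb⟩
    exact ⟨v0, subset_convexHull ℝ _ (Finset.mem_of_mem_erase hv0),
      Finset.ne_of_mem_erase hv0, rfl⟩
  · apply le_csInf
    · obtain ⟨v0, hv0⟩ := hne
      exact ⟨_, v0, subset_convexHull ℝ _ (Finset.mem_of_mem_erase hv0),
        Finset.ne_of_mem_erase hv0, rfl⟩
    · exact lb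
end

section
/- Let w > 0 and κ ∈ (1, 2), and define F : ℝ → ℝ by F(c) := c + ∫ min(0, w·x − κ·c) dγ(x). Let τ* be the unique positive real number with γ([τ*, ∞)) = (κ−1)/κ, and set c* := w·τ*/κ. Then F(c) < F(c*) for every c ≠ c* (i.e., c* is the strict global maximizer of F), and F(c*) = −(w/√(2π))·exp(−(τ*)²/2). -/
open MeasureTheory ProbabilityTheory

/-- `F w κ c = c + ∫ min(0, w·x − κ·c) dγ(x)` where `γ` is the standard Gaussian measure. -/
noncomputable def F (w κ c : ℝ) : ℝ :=
  c + ∫ x, min 0 (w * x - κ * c) ∂(gaussianReal 0 1)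

open Real Set


noncomputable def sp (x : ℝ) : ℝ := (Real.sqrt (2 * Real.pi))⁻¹ * Real.exp (-x ^ 2 / 2)

lemma sp_eq_pdf : sp = gaussianPDFReal 0 1 := by
  funext x
  simp [sp, gaussianPDFReal]

lemma sp_pos (x : ℝ) : 0 < sp x := by
  have : 0 < Real.sqrt (2 * Real.pi) := Real.sqrt_pos.2 (by positivity)
  exact mul_pos (inv_pos.2 this) (Real.exp_pos _)

lemma sp_cont : Continuous sp := by
  unfold sp; fun_prop

lemma sp_hasDeriv (x : ℝ) : HasDerivAt sp (-x * sp x) x := by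
  have h1 : HasDerivAt (fun y : ℝ => -y ^ 2 / 2) (-x) x := by
    have := ((hasDerivAt_pow 2 x).neg).div_const 2
    refine this.congr_deriv ?_
    ring
  have h2 : HasDerivAt (fun y : ℝ => Real.exp (-y ^ 2 / 2)) (Real.exp (-x^2/2) * (-x)) x :=
    (Real.hasDerivAt_exp _).comp x h1
  have := h2.const_mul (Real.sqrt (2 * Real.pi))⁻¹
  refine this.congr_deriv ?_
  unfold sp; ring

lemma integrable_sp : Integrable sp := by
  have := integrable_exp_neg_mul_sq (b := (1:ℝ)/2) (by norm_num)
  have h := this.const_mul (Real.sqrt (2 * Real.pi))⁻¹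
  refine h.congr ?_
  filter_upwards with x
  unfold sp
  ring_nf

lemma integrable_sp_mul_id : Integrable (fun x => sp x * x) := by
  have h0 := integrable_rpow_mul_exp_neg_mul_sq (b := (1:ℝ)/2) (by norm_num) (s := 1) (by norm_num)
  have h1 : Integrable (fun x : ℝ => |x| * Real.exp (-(1/2) * x ^ 2)) := by
    have := h0.abs
    refine this.congr ?_
    filter_upwards with x
    rw [abs_mul, Real.rpow_one, abs_of_nonneg (Real.exp_pos _).le]
  have h := h1.const_mul (Real.sqrt (2 * Real.pi))⁻¹
  refine h.mono' ((sp_cont.mul continuous_id).aestronglyMeasurable) ?_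
  filter_upwards with x
  apply le_of_eq
  rw [Real.norm_eq_abs, abs_mul, abs_of_nonneg (sp_pos x).le]
  unfold sp
  rw [show -(1/2 : ℝ) * x ^ 2 = -x^2/2 by ring]
  ring

lemma gauss_eq : gaussianReal 0 1 = volume.withDensity (fun x => ((sp x).toNNReal : ENNReal)) := by
  rw [gaussianReal_of_var_ne_zero 0 one_ne_zero]
  congr 1
  funext x
  rw [gaussianPDF, sp_eq_pdf, ENNReal.ofReal]

lemma integral_gauss (g : ℝ → ℝ) :
    ∫ x, g x ∂(gaussianReal 0 1) = ∫ x, sp x * g x := by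
  rw [gauss_eq, integral_withDensity_eq_integral_smul (sp_cont.measurable.real_toNNReal)]
  congr 1
  funext x
  rw [NNReal.smul_def, smul_eq_mul, Real.coe_toNNReal _ (sp_pos x).le]

lemma setIntegral_gauss (g : ℝ → ℝ) {s : Set ℝ} (hs : MeasurableSet s) :
    ∫ x in s, g x ∂(gaussianReal 0 1) = ∫ x in s, sp x * g x := by
  rw [gauss_eq, restrict_withDensity hs,
    integral_withDensity_eq_integral_smul (sp_cont.measurable.real_toNNReal)]
  congr 1
  funext x
  rw [NNReal.smul_def, smul_eq_mul, Real.coe_toNNReal _ (sp_pos x).le]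

noncomputable def Phi (t : ℝ) : ℝ := ((gaussianReal 0 1) (Set.Iic t)).toReal

lemma Phi_eq (t : ℝ) : Phi t = ∫ x in Set.Iic t, sp x := by
  have h1 : ∫ x in Set.Iic t, (1:ℝ) ∂(gaussianReal 0 1) = Phi t := by
    rw [setIntegral_const, smul_eq_mul, mul_one, Phi]
    rfl
  rw [← h1, setIntegral_gauss _ measurableSet_Iic]
  simp

lemma integral_Iic_sp_mul_id (t : ℝ) : ∫ x in Set.Iic t, sp x * x = -sp t := by
  have := integral_Iic_of_hasDerivAt_of_tendsto' (a := t) (f := fun x => -sp x)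
    (f' := fun x => sp x * x) (m := 0)
    (fun x _ => (sp_hasDeriv x).neg.congr_deriv (by ring))
    (integrable_sp_mul_id.integrableOn) ?_
  · rw [this, sub_zero]
  · have hsq : Filter.Tendsto (fun x : ℝ => x ^ 2) Filter.atBot Filter.atTop := by
      have := (Filter.tendsto_pow_atTop (n := 2) (α := ℝ) two_ne_zero).comp (Filter.tendsto_abs_atBot_atTop (G := ℝ))
      refine this.congr (fun x => ?_)
      exact sq_abs x
    have h : Filter.Tendsto (fun x : ℝ => -x^2/2) Filter.atBot Filter.atBot := by
      apply Filter.Tendsto.atBot_div_const (by norm_num : (0:ℝ) < 2)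
      exact Filter.tendsto_neg_atTop_atBot.comp hsq
    have h3 := (Real.tendsto_exp_atBot.comp h).const_mul (Real.sqrt (2 * Real.pi))⁻¹
    have h4 : Filter.Tendsto sp Filter.atBot (nhds ((Real.sqrt (2*Real.pi))⁻¹ * 0)) := h3
    rw [mul_zero] at h4
    simpa using h4.neg

lemma Phi_sub (a b : ℝ) : Phi b - Phi a = ∫ x in a..b, sp x := by
  have key : ∀ u v : ℝ, u ≤ v → Phi v - Phi u = ∫ x in u..v, sp x := by
    intro u v huv
    rw [intervalIntegral.integral_of_le huv, Phi_eq, Phi_eq]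
    have hun : Set.Iic v = Set.Iic u ∪ Set.Ioc u v := (Set.Iic_union_Ioc_eq_Iic huv).symm
    rw [hun, setIntegral_union (Set.Iic_disjoint_Ioc le_rfl) measurableSet_Ioc
      integrable_sp.integrableOn integrable_sp.integrableOn]
    ring
  rcases le_total a b with h | h
  · exact key a b h
  · rw [intervalIntegral.integral_symm]
    have := key b a h
    linarith [this]

lemma Phi_hasDeriv (t : ℝ) : HasDerivAt Phi (sp t) t := by
  have h1 : ∀ u, Phi u = Phi 0 + ∫ x in (0:ℝ)..u, sp x := by
    intro u
    have := Phi_sub 0 u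
    linarith
  have h2 : HasDerivAt (fun u => Phi 0 + ∫ x in (0:ℝ)..u, sp x) (sp t) t := by
    have := (sp_cont.integral_hasStrictDerivAt 0 t).hasDerivAt
    simpa using (this.const_add (Phi 0))
  exact h2.congr_deriv rfl |>.congr_of_eventuallyEq (Filter.Eventually.of_forall fun u => (h1 u))

lemma Phi_strictMono : StrictMono Phi :=
  strictMono_of_deriv_pos fun t => by rw [(Phi_hasDeriv t).deriv]; exact sp_pos t

noncomputable def gfun (κ : ℝ) (t : ℝ) : ℝ := t / κ - sp t - t * Phi t

lemma gfun_hasDeriv (κ t : ℝ) : HasDerivAt (gfun κ) (1/κ - Phi t) t := by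
  have h1 : HasDerivAt (fun u : ℝ => u / κ) (1/κ) t := by
    simpa using (hasDerivAt_id t).div_const κ
  have h2 := sp_hasDeriv t
  have h3 : HasDerivAt (fun u => u * Phi u) (1 * Phi t + t * sp t) t :=
    (hasDerivAt_id t).mul (Phi_hasDeriv t)
  have := (h1.sub h2).sub h3
  refine this.congr_deriv ?_
  ring

lemma gfun_max {κ τ : ℝ} (hΦτ : Phi τ = 1/κ) : ∀ t, t ≠ τ → gfun κ t < gfun κ τ := by
  have hc : Continuous (gfun κ) := by
    have : Differentiable ℝ (gfun κ) := fun t => (gfun_hasDeriv κ t).differentiableAt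
    exact this.continuous
  have hmono : StrictMonoOn (gfun κ) (Set.Iic τ) := by
    apply strictMonoOn_of_deriv_pos (convex_Iic τ) hc.continuousOn
    intro t ht
    rw [interior_Iic] at ht
    rw [(gfun_hasDeriv κ t).deriv, ← hΦτ]
    have := Phi_strictMono ht
    linarith
  have hanti : StrictAntiOn (gfun κ) (Set.Ici τ) := by
    apply strictAntiOn_of_deriv_neg (convex_Ici τ) hc.continuousOn
    intro t ht
    rw [interior_Ici] at ht
    rw [(gfun_hasDeriv κ t).deriv, ← hΦτ]
    have := Phi_strictMono ht
    linarith
  intro t ht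
  rcases lt_or_gt_of_ne ht with h | h
  · exact hmono h.le Set.self_mem_Iic h
  · exact hanti Set.self_mem_Ici h.le h

lemma F_closed (w κ c : ℝ) (hw : 0 < w) (hκ : κ ≠ 0) :
    F w κ c = w * gfun κ (κ * c / w) := by
  set t := κ * c / w with ht
  have hwt : w * t = κ * c := by
    rw [ht]; field_simp
  have hmin : (fun x => min 0 (w * x - κ * c)) = Set.indicator (Set.Iic t) (fun x => w * x - κ * c) := by
    funext x
    by_cases hx : x ≤ t
    · rw [Set.indicator_of_mem (Set.mem_Iic.2 hx)]
      apply min_eq_right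
      nlinarith [mul_le_mul_of_nonneg_left hx hw.le]
    · rw [Set.indicator_of_notMem (by simpa using hx)]
      apply min_eq_left
      push_neg at hx
      nlinarith [mul_lt_mul_of_pos_left hx hw]
  have hint : ∫ x, min 0 (w * x - κ * c) ∂(gaussianReal 0 1)
      = ∫ x in Set.Iic t, sp x * (w * x - κ * c) := by
    rw [hmin, integral_indicator measurableSet_Iic, setIntegral_gauss _ measurableSet_Iic]
  have hsplit : ∫ x in Set.Iic t, sp x * (w * x - κ * c)
      = w * (∫ x in Set.Iic t, sp x * x) - (κ * c) * ∫ x in Set.Iic t, sp x := by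
    have h1 : IntegrableOn (fun x => w * (sp x * x)) (Set.Iic t) :=
      (integrable_sp_mul_id.const_mul w).integrableOn
    have h2 : IntegrableOn (fun x => (κ * c) * sp x) (Set.Iic t) :=
      (integrable_sp.const_mul (κ * c)).integrableOn
    have : ∀ x, sp x * (w * x - κ * c) = w * (sp x * x) - (κ * c) * sp x := fun x => by ring
    simp_rw [this]
    rw [integral_sub h1 h2, integral_const_mul, integral_const_mul]
  rw [F, hint, hsplit, integral_Iic_sp_mul_id, ← Phi_eq, gfun]
  have h3 : w * t = κ * c := hwt
  field_simp
  linear_combination (κ * Phi t - 1) * h3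

lemma Phi_tau {κ τ : ℝ} (hκ0 : κ ≠ 0)
    (hτ : ((gaussianReal 0 1) (Set.Ici τ)).toReal = (κ - 1) / κ) : Phi τ = 1 / κ := by
  set γ := gaussianReal 0 1
  have hsing : γ {τ} = 0 :=
    (gaussianReal_absolutelyContinuous 0 one_ne_zero) (measure_singleton τ)
  have hIoiIci : γ (Set.Ioi τ) = γ (Set.Ici τ) := by
    apply le_antisymm (measure_mono Set.Ioi_subset_Ici_self)
    calc γ (Set.Ici τ) = γ ({τ} ∪ Set.Ioi τ) := by
          congr 1
          rw [Set.union_comm, Set.Ioi_union_left]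
      _ ≤ γ {τ} + γ (Set.Ioi τ) := measure_union_le _ _
      _ = γ (Set.Ioi τ) := by rw [hsing, zero_add]
  have hunion : γ (Set.Iic τ) + γ (Set.Ioi τ) = 1 := by
    rw [← measure_union (Set.Iic_disjoint_Ioi le_rfl) measurableSet_Ioi,
      Set.Iic_union_Ioi, measure_univ]
  have h1 : (γ (Set.Iic τ)).toReal + (γ (Set.Ioi τ)).toReal = 1 := by
    rw [← ENNReal.toReal_add (measure_ne_top _ _) (measure_ne_top _ _), hunion, ENNReal.toReal_one]
  have h2 : (γ (Set.Ioi τ)).toReal = (κ - 1) / κ := by rw [hIoiIci]; exact hτ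
  have : Phi τ = 1 - (κ - 1) / κ := by rw [Phi]; linarith [h1, h2]
  rw [this]
  field_simp
  ring

/-- For `w > 0`, `κ ∈ (1,2)`, and `τ*` the unique positive real with
`γ([τ*,∞)) = (κ−1)/κ`, the point `c* = w·τ*/κ` is the strict global maximizer of `F`,
with maximum value `−(w/√(2π))·exp(−(τ*)²/2)`. -/
theorem stmt5 (w κ τstar : ℝ) (hw : 0 < w) (hκ : κ ∈ Set.Ioo (1 : ℝ) 2)
    (hτpos : 0 < τstar)
    (hτ : ((gaussianReal 0 1) (Set.Ici τstar)).toReal = (κ - 1) / κ) :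
    (∀ c : ℝ, c ≠ w * τstar / κ → F w κ c < F w κ (w * τstar / κ)) ∧
      F w κ (w * τstar / κ)
        = -(w / Real.sqrt (2 * Real.pi)) * Real.exp (-τstar ^ 2 / 2) := by
  have hκ0 : (0:ℝ) < κ := lt_trans one_pos hκ.1
  have hκ0' : κ ≠ 0 := hκ0.ne'
  have hw' : w ≠ 0 := hw.ne'
  have hΦτ : Phi τstar = 1 / κ := Phi_tau hκ0' hτ
  have hmax := gfun_max (κ := κ) (τ := τstar) hΦτ
  have hcstar : κ * (w * τstar / κ) / w = τstar := by field_simp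
  constructor
  · intro c hc
    rw [F_closed w κ c hw hκ0', F_closed w κ _ hw hκ0', hcstar]
    apply mul_lt_mul_of_pos_left _ hw
    apply hmax
    intro habs
    apply hc
    field_simp at habs
    field_simp
    linarith [habs]
  · rw [F_closed w κ _ hw hκ0', hcstar, gfun, hΦτ, sp]
    field_simp
    ring
end

section
/- Let w > 0 and κ ∈ (1, 2), and define F : ℝ → ℝ by F(c) := c + ∫ min(0, w·x − κ·c) dγ(x). Let τ* be the unique positive real number with γ([τ*, ∞)) = (κ−1)/κ, and set c* := w·τ*/κ. Then F(c*) − F(0) = (w/√(2π))·(1 − exp(−(τ*)²/2)), and this quantity is strictly positive. -/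
open MeasureTheory ProbabilityTheory Real

noncomputable def pdfNN : ℝ → NNReal := fun x => (gaussianPDFReal 0 1 x).toNNReal

lemma pdfNN_meas : Measurable pdfNN :=
  (measurable_gaussianPDFReal 0 1).real_toNNReal

lemma pdfNN_coe (x : ℝ) : (pdfNN x : ℝ) = (Real.sqrt (2 * π))⁻¹ * Real.exp (- x^2 / 2) := by
  rw [pdfNN, Real.coe_toNNReal _ (gaussianPDFReal_nonneg 0 1 x)]
  simp [gaussianPDFReal]

lemma gamma_eq : gaussianReal 0 1 = volume.withDensity (fun x => (pdfNN x : ENNReal)) := by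
  rw [gaussianReal_of_var_ne_zero 0 one_ne_zero]
  rfl

lemma integrable_id_gamma : Integrable (fun x : ℝ => x) (gaussianReal 0 1) := by
  rw [gamma_eq, integrable_withDensity_iff_integrable_smul pdfNN_meas]
  have h := (integrable_mul_exp_neg_mul_sq (b := 1/2) (by norm_num)).const_mul
    ((Real.sqrt (2 * π))⁻¹)
  refine h.congr ?_
  filter_upwards with x
  rw [NNReal.smul_def, smul_eq_mul, pdfNN_coe]
  ring_nf

lemma integrable_min_gamma (t : ℝ) :
    Integrable (fun x : ℝ => min 0 (x - t)) (gaussianReal 0 1) := by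
  have hbase : Integrable (fun x : ℝ => x - t) (gaussianReal 0 1) :=
    integrable_id_gamma.sub (integrable_const t)
  refine hbase.mono ?_ ?_
  · exact (continuous_const.min (continuous_id.sub continuous_const)).aestronglyMeasurable
  · filter_upwards with x
    simp only [Real.norm_eq_abs]
    rcases le_total (x - t) 0 with h | h
    · rw [min_eq_right h]
    · rw [min_eq_left h]; simp [abs_nonneg]

lemma key_integral {τ : ℝ} (hτ : 0 < τ) :
    ∫ x in Set.Ioc 0 τ, x ∂(gaussianReal 0 1)
      = (Real.sqrt (2 * π))⁻¹ * (1 - Real.exp (-τ^2 / 2)) := by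
  rw [gamma_eq, setIntegral_withDensity_eq_setIntegral_smul pdfNN_meas _ measurableSet_Ioc,
    ← intervalIntegral.integral_of_le hτ.le]
  have hderiv : ∀ x ∈ Set.uIcc 0 τ, HasDerivAt
      (fun y : ℝ => -((Real.sqrt (2 * π))⁻¹ * Real.exp (-y^2 / 2)))
      (pdfNN x • x) x := by
    intro x _
    have h1 : HasDerivAt (fun y : ℝ => -y^2/2) (-x) x := by
      have := ((hasDerivAt_pow 2 x).neg).div_const 2
      refine this.congr_deriv ?_
      push_cast
      norm_num
      ring
    have h2 := (h1.exp.const_mul ((Real.sqrt (2 * π))⁻¹)).neg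
    refine h2.congr_deriv ?_
    rw [NNReal.smul_def, smul_eq_mul, pdfNN_coe]
    ring
  rw [intervalIntegral.integral_eq_sub_of_hasDerivAt hderiv]
  · norm_num
    ring
  · apply Continuous.intervalIntegrable
    have hp : Continuous pdfNN := by
      apply continuous_real_toNNReal.comp
      rw [gaussianPDFReal_def]
      fun_prop
    exact hp.smul continuous_id

lemma Iic_toReal {τ κ : ℝ} (hκ : 1 < κ)
    (hτ : ((gaussianReal 0 1) (Set.Ici τ)).toReal = (κ - 1) / κ) :
    ((gaussianReal 0 1) (Set.Iic τ)).toReal = 1 / κ := by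
  have hκ0 : κ ≠ 0 := by linarith
  have h0 : gaussianReal 0 1 {τ} = 0 :=
    gaussianReal_absolutelyContinuous 0 one_ne_zero (Real.volume_singleton)
  have hIci : gaussianReal 0 1 (Set.Ici τ) = gaussianReal 0 1 (Set.Ioi τ) := by
    refine le_antisymm ?_ (measure_mono Set.Ioi_subset_Ici_self)
    calc gaussianReal 0 1 (Set.Ici τ) ≤ gaussianReal 0 1 ({τ} ∪ Set.Ioi τ) := by
          refine measure_mono fun x hx => ?_
          rcases eq_or_lt_of_le (Set.mem_Ici.mp hx) with h | h
          · exact Or.inl (by simp [h.symm])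
          · exact Or.inr h
      _ ≤ gaussianReal 0 1 {τ} + gaussianReal 0 1 (Set.Ioi τ) := measure_union_le _ _
      _ = gaussianReal 0 1 (Set.Ioi τ) := by rw [h0, zero_add]
  have hcompl : gaussianReal 0 1 (Set.Iic τ) = 1 - gaussianReal 0 1 (Set.Ioi τ) := by
    rw [← Set.compl_Ioi]
    exact prob_compl_eq_one_sub measurableSet_Ioi
  rw [hcompl, ENNReal.toReal_sub_of_le prob_le_one ENNReal.one_ne_top, ← hIci,
    ENNReal.toReal_one, hτ]
  field_simp
  ring

lemma diff_integral {τ κ : ℝ} (hτpos : 0 < τ) (hκ : 1 < κ)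
    (hτ : ((gaussianReal 0 1) (Set.Ici τ)).toReal = (κ - 1) / κ) :
    ∫ x, (min 0 (x - τ) - min 0 (x - 0)) ∂(gaussianReal 0 1)
      = (Real.sqrt (2 * π))⁻¹ * (1 - Real.exp (-τ^2 / 2)) - τ * (1/κ) := by
  have heq : (fun x : ℝ => min 0 (x - τ) - min 0 (x - 0))
      = fun x => (Set.Ioc 0 τ).indicator (fun y => y) x
          - (Set.Iic τ).indicator (fun _ => τ) x := by
    ext x
    simp only [sub_zero]
    rcases le_or_gt x 0 with h | h
    · rw [Set.indicator_of_notMem (by simp; intro h'; linarith),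
        Set.indicator_of_mem (by simp; linarith),
        min_eq_right (by linarith), min_eq_right h]
      ring
    · rcases le_or_gt x τ with h2 | h2
      · rw [Set.indicator_of_mem (Set.mem_Ioc.mpr ⟨h, h2⟩),
          Set.indicator_of_mem (by simpa using h2),
          min_eq_right (by linarith), min_eq_left h.le]
        ring
      · rw [Set.indicator_of_notMem (by simp; intro; linarith),
          Set.indicator_of_notMem (by simpa using h2),
          min_eq_left (by linarith), min_eq_left h.le]
  rw [heq, integral_sub (integrable_id_gamma.indicator measurableSet_Ioc)
      ((integrable_const τ).indicator measurableSet_Iic),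
    integral_indicator measurableSet_Ioc, integral_indicator measurableSet_Iic,
    key_integral hτpos, setIntegral_const, measureReal_def, Iic_toReal hκ hτ]
  rw [smul_eq_mul]
  ring

/-- For `w > 0`, `κ ∈ (1,2)`, and `τ*` the unique positive real with
`γ([τ*,∞)) = (κ−1)/κ`, setting `c* = w·τ*/κ`, one has
`F(c*) − F(0) = (w/√(2π))·(1 − exp(−(τ*)²/2)) > 0`. -/
theorem stmt6 (w κ τstar : ℝ) (hw : 0 < w) (hκ : κ ∈ Set.Ioo (1 : ℝ) 2)
    (hτpos : 0 < τstar)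
    (hτ : ((gaussianReal 0 1) (Set.Ici τstar)).toReal = (κ - 1) / κ) :
    F w κ (w * τstar / κ) - F w κ 0
        = (w / Real.sqrt (2 * Real.pi)) * (1 - Real.exp (-τstar ^ 2 / 2)) ∧
      0 < F w κ (w * τstar / κ) - F w κ 0 := by
  have hκ1 : 1 < κ := hκ.1
  have hκ0 : κ ≠ 0 := by linarith
  have key : F w κ (w * τstar / κ) - F w κ 0
      = (w / Real.sqrt (2 * π)) * (1 - Real.exp (-τstar ^ 2 / 2)) := by
    have e1 : (fun x : ℝ => min 0 (w * x - κ * (w * τstar / κ)))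
        = fun x => w * min 0 (x - τstar) := by
      ext x
      rw [mul_min_of_nonneg _ _ hw.le, mul_zero, mul_sub]
      congr 1
      field_simp
    have e0 : (fun x : ℝ => min 0 (w * x - κ * 0))
        = fun x => w * min 0 (x - 0) := by
      ext x
      rw [mul_min_of_nonneg _ _ hw.le, mul_zero, mul_sub]
      ring_nf
    rw [F, F, e1, e0, integral_const_mul, integral_const_mul]
    have hsub : ∫ x, min 0 (x - τstar) ∂(gaussianReal 0 1)
          - ∫ x, min 0 (x - 0) ∂(gaussianReal 0 1)
        = ∫ x, (min 0 (x - τstar) - min 0 (x - 0)) ∂(gaussianReal 0 1) :=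
      (integral_sub (integrable_min_gamma τstar) (integrable_min_gamma 0)).symm
    have : w * τstar / κ + w * ∫ x, min 0 (x - τstar) ∂(gaussianReal 0 1) + 0
          - (0 + w * ∫ x, min 0 (x - 0) ∂(gaussianReal 0 1))
        = w * τstar / κ
          + w * ((Real.sqrt (2 * π))⁻¹ * (1 - Real.exp (-τstar^2 / 2)) - τstar * (1/κ)) := by
      rw [← diff_integral hτpos hκ1 hτ, ← hsub]
      ring
    calc w * τstar / κ + w * ∫ x, min 0 (x - τstar) ∂(gaussianReal 0 1)
          - (0 + w * ∫ x, min 0 (x - 0) ∂(gaussianReal 0 1))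
        = w * τstar / κ
          + w * ((Real.sqrt (2 * π))⁻¹ * (1 - Real.exp (-τstar^2 / 2)) - τstar * (1/κ)) := by
          linarith [this]
      _ = (w / Real.sqrt (2 * π)) * (1 - Real.exp (-τstar ^ 2 / 2)) := by
          field_simp
          ring
  refine ⟨key, ?_⟩
  rw [key]
  apply mul_pos (div_pos hw (Real.sqrt_pos.mpr (by positivity)))
  have : Real.exp (-τstar ^ 2 / 2) < 1 := by
    rw [Real.exp_lt_one_iff]
    nlinarith [pow_pos hτpos 2]
  linarith
end

section
/- Let S ≥ 1 be a natural number, α ∈ (0,1), and κ > 1 + 6S. Let y* ∈ ℝ^{S×{0,1}} have nonnegative entries with Σ_s y*(s,1) = α and Σ_{s,a} y*(s,a) = 1, and set x*(s) := y*(s,0) + y*(s,1), so x* ∈ Δ^S. Then there exists ε₀ > 0 (depending only on S, α, κ, y*) such that for every ε ∈ (0, ε₀], every x, x' ∈ Δ^S with ‖x − x*‖_∞ ≤ ε and ‖x' − x*‖_∞ ≤ ε, and every feasible action y for x with ‖y − y*‖_∞ ≤ κε, there exists a feasible action y' for x' satisfying ‖y' − y*‖_∞ ≤ κε and ‖y −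 y'‖_∞ ≤ (S+1)·‖x − x'‖_∞. -/
set_option maxHeartbeats 4000000 in
/-- Locally Lipschitz action mapping: for states `x, x'` in the simplex within `ε` of
`x* = y*(·,0) + y*(·,1)` and a feasible action `y` for `x` within `κε` of `y*`, there is a
feasible action `y'` for `x'` within `κε` of `y*` with `‖y − y'‖_∞ ≤ (S+1)·‖x − x'‖_∞`. -/
theorem stmt11 (S : ℕ) (hS : 1 ≤ S) (α : ℝ) (hα : α ∈ Set.Ioo (0 : ℝ) 1)
    (κ : ℝ) (hκ : 1 + 6 * (S : ℝ) < κ)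
    (ystar : Fin S → Fin 2 → ℝ) (hy0 : ∀ s a, 0 ≤ ystar s a)
    (hyb : ∑ s, ystar s 1 = α) (hysum : ∑ s, (ystar s 0 + ystar s 1) = 1) :
    ∃ ε₀ : ℝ, 0 < ε₀ ∧ ∀ ε ∈ Set.Ioc (0 : ℝ) ε₀,
      ∀ x x' : Fin S → ℝ,
        (∀ s, 0 ≤ x s) → (∑ s, x s = 1) →
        (∀ s, 0 ≤ x' s) → (∑ s, x' s = 1) →
        ‖x - fun s => ystar s 0 + ystar s 1‖ ≤ ε →
        ‖x' - fun s => ystar s 0 + ystar s 1‖ ≤ ε →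
        ∀ y : Fin S → Fin 2 → ℝ,
          (∀ s a, 0 ≤ y s a) → (∀ s, y s 0 + y s 1 = x s) → (∑ s, y s 1 = α) →
          ‖y - ystar‖ ≤ κ * ε →
          ∃ y' : Fin S → Fin 2 → ℝ,
            (∀ s a, 0 ≤ y' s a) ∧ (∀ s, y' s 0 + y' s 1 = x' s) ∧ (∑ s, y' s 1 = α) ∧
              ‖y' - ystar‖ ≤ κ * ε ∧ ‖y - y'‖ ≤ ((S : ℝ) + 1) * ‖x - x'‖ := by
  classical
  haveI hne : Nonempty (Fin S) := ⟨⟨0, hS⟩⟩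
  haveI hne2 : Nonempty (Fin S × Fin 2) := ⟨(⟨0, hS⟩, 0)⟩
  have hfin2 : ∀ b : Fin 2, b = 0 ∨ b = 1 := by decide
  have hS1 : (1:ℝ) ≤ (S:ℝ) := by exact_mod_cast hS
  have hκ1 : (1:ℝ) < κ := by nlinarith
  have hκ0 : (0:ℝ) < κ := by linarith
  have hSκ : (S:ℝ) < κ := by nlinarith
  obtain ⟨hα0, hα1⟩ := hα
  obtain ⟨m, hm⟩ : ∃ m : ℝ, m = Finset.univ.inf' Finset.univ_nonempty
      (fun p : Fin S × Fin 2 => if 0 < ystar p.1 p.2 then ystar p.1 p.2 else 1) := ⟨_, rfl⟩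
  have hm0 : 0 < m := by
    rw [hm, Finset.lt_inf'_iff]
    intro p _
    split_ifs with h
    · exact h
    · exact one_pos
  have hmle : ∀ s a, 0 < ystar s a → m ≤ ystar s a := by
    intro s a h
    have h2 := Finset.inf'_le
      (fun p : Fin S × Fin 2 => if 0 < ystar p.1 p.2 then ystar p.1 p.2 else 1)
      (Finset.mem_univ (s, a))
    rw [← hm] at h2
    simpa [h] using h2
  refine ⟨m / (3 * κ), div_pos hm0 (by linarith), ?_⟩
  rintro ε ⟨hε0, hεm⟩ x x' hx0 hx1 hx'0 hx'1 hxs hx's y hyA hyrow hycol hyn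
  have hε3 : ε * (3 * κ) ≤ m := (le_div_iff₀ (by linarith)).mp hεm
  have hκε : 0 ≤ κ * ε := mul_nonneg hκ0.le hε0.le
  have hεκε : ε ≤ κ * ε := by nlinarith
  -- pointwise bounds from the norm hypotheses
  have hpx' : ∀ s, -ε ≤ x' s - (ystar s 0 + ystar s 1) ∧ x' s - (ystar s 0 + ystar s 1) ≤ ε := by
    intro s
    have h1 := norm_le_pi_norm (x' - fun t => ystar t 0 + ystar t 1) s
    simp only [Pi.sub_apply, Real.norm_eq_abs] at h1
    exact abs_le.mp (h1.trans hx's)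
  have hpy : ∀ s a, -(κ*ε) ≤ y s a - ystar s a ∧ y s a - ystar s a ≤ κ*ε := by
    intro s a
    have h1 := norm_le_pi_norm (y - ystar) s
    have h2 := norm_le_pi_norm ((y - ystar) s) a
    simp only [Pi.sub_apply, Real.norm_eq_abs] at h1 h2
    exact abs_le.mp (h2.trans (h1.trans hyn))
  obtain ⟨d, hd⟩ : ∃ d : ℝ, d = ‖x - x'‖ := ⟨_, rfl⟩
  have hd0 : 0 ≤ d := hd ▸ norm_nonneg _
  have hpd : ∀ s, -d ≤ x' s - x s ∧ x' s - x s ≤ d := by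
    intro s
    have h1 := norm_le_pi_norm (x - x') s
    simp only [Pi.sub_apply, Real.norm_eq_abs] at h1
    rw [← hd] at h1
    have h2 := abs_le.mp h1
    exact ⟨by linarith [h2.2], by linarith [h2.1]⟩
  -- the admissible interval [L s, U s] for the change of y s 1
  obtain ⟨L, hL⟩ : ∃ L : Fin S → ℝ, L = fun s =>
      max (-(y s 1)) (max (ystar s 1 - κ*ε - y s 1)
        ((x' s - x s) + y s 0 - ystar s 0 - κ*ε)) := ⟨_, rfl⟩
  obtain ⟨U, hU⟩ : ∃ U : Fin S → ℝ, U = fun s =>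
      min ((x' s - x s) + y s 0) (min (ystar s 1 + κ*ε - y s 1)
        ((x' s - x s) + y s 0 - ystar s 0 + κ*ε)) := ⟨_, rfl⟩
  have hU1 : ∀ s, U s ≤ (x' s - x s) + y s 0 := fun s => by
    simp only [hU]; exact min_le_left _ _
  have hU2 : ∀ s, U s ≤ ystar s 1 + κ*ε - y s 1 := fun s => by
    simp only [hU]; exact (min_le_right _ _).trans (min_le_left _ _)
  have hU3 : ∀ s, U s ≤ (x' s - x s) + y s 0 - ystar s 0 + κ*ε := fun s => by
    simp only [hU]; exact (min_le_right _ _).trans (min_le_right _ _)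
  have hL1 : ∀ s, -(y s 1) ≤ L s := fun s => by simp only [hL]; exact le_max_left _ _
  have hL2 : ∀ s, ystar s 1 - κ*ε - y s 1 ≤ L s := fun s => by
    simp only [hL]; exact (le_max_left _ _).trans (le_max_right _ _)
  have hL3 : ∀ s, (x' s - x s) + y s 0 - ystar s 0 - κ*ε ≤ L s := fun s => by
    simp only [hL]; exact (le_max_right _ _).trans (le_max_right _ _)
  have hLU : ∀ s, L s ≤ U s := by
    intro s
    have hr := hyrow s
    have h1 := hpx' s
    have h2 := hpd s
    have h3 := hpy s 0
    have h4 := hpy s 1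
    simp only [hL, hU]
    refine max_le (le_min ?_ (le_min ?_ ?_)) (max_le (le_min ?_ (le_min ?_ ?_))
      (le_min ?_ (le_min ?_ ?_))) <;>
      linarith [hx'0 s, hy0 s 0, hy0 s 1, hyA s 0, hyA s 1, hκε, hεκε, hε0.le, h1.1, h1.2,
        h2.1, h2.2, h3.1, h3.2, h4.1, h4.2]
  have hLd : ∀ s, L s ≤ d := by
    intro s
    have h2 := hpd s; have h3 := hpy s 0; have h4 := hpy s 1
    simp only [hL]
    refine max_le (by linarith [hyA s 1]) (max_le (by linarith [h4.1, hd0]) ?_)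
    linarith [h2.2, h3.2, hκε]
  have hUd : ∀ s, -d ≤ U s := by
    intro s
    have h2 := hpd s; have h3 := hpy s 0; have h4 := hpy s 1
    simp only [hU]
    refine le_min (by linarith [hyA s 0, h2.1]) (le_min (by linarith [h4.2, hd0]) ?_)
    linarith [h2.1, h3.1, hκε]
  have hLδ : ∀ s, L s ≤ (x' s - x s) + d := by
    intro s
    have h2 := hpd s; have h3 := hpy s 0; have h4 := hpy s 1
    simp only [hL]
    refine max_le (by linarith [hyA s 1, h2.1]) (max_le (by linarith [h4.1, h2.1, hd0]) ?_)
    linarith [h3.2, hd0]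
  have hUδ : ∀ s, (x' s - x s) - d ≤ U s := by
    intro s
    have h2 := hpd s; have h3 := hpy s 0; have h4 := hpy s 1
    simp only [hU]
    refine le_min (by linarith [hyA s 0, hd0]) (le_min (by linarith [h4.2, h2.2, hd0]) ?_)
    linarith [h3.1, hd0]
  -- the base choice: clamp 0 into [L s, U s]
  obtain ⟨a0, ha0⟩ : ∃ a0 : Fin S → ℝ, a0 = fun s => max (L s) (min 0 (U s)) := ⟨_, rfl⟩
  have ha0L : ∀ s, L s ≤ a0 s := fun s => by simp only [ha0]; exact le_max_left _ _
  have ha0U : ∀ s, a0 s ≤ U s := fun s => by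
    simp only [ha0]; exact max_le (hLU s) (min_le_right _ _)
  have ha0d : ∀ s, -d ≤ a0 s ∧ a0 s ≤ d := by
    intro s
    constructor
    · have h3 : min 0 (U s) ≤ a0 s := by simp only [ha0]; exact le_max_right _ _
      have h2 : -d ≤ min 0 (U s) := le_min (by linarith) (hUd s)
      linarith
    · have h3 : a0 s ≤ max (L s) 0 := by
        simp only [ha0]; exact max_le_max le_rfl (min_le_left _ _)
      have h2 : max (L s) 0 ≤ d := max_le (hLd s) hd0
      linarith
  have ha0δ : ∀ s, (x' s - x s) - d ≤ a0 s ∧ a0 s ≤ (x' s - x s) + d := by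
    intro s
    have h2 := hpd s
    constructor
    · have h3 : min 0 (U s) ≤ a0 s := by simp only [ha0]; exact le_max_right _ _
      have h4 : (x' s - x s) - d ≤ min 0 (U s) := le_min (by linarith [h2.2]) (hUδ s)
      linarith
    · have h3 : a0 s ≤ max (L s) 0 := by
        simp only [ha0]; exact max_le_max le_rfl (min_le_left _ _)
      have h4 : max (L s) 0 ≤ (x' s - x s) + d := max_le (hLδ s) (by linarith [h2.1])
      linarith
  -- sum facts
  have hsume : ∑ s, (y s 1 - ystar s 1) = 0 := by
    rw [Finset.sum_sub_distrib, hycol, hyb, sub_self]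
  have hUsum : 0 ≤ ∑ s, U s := by
    have key : ∀ s, (if 0 < ystar s 0 then (κ - 1) * ε else -ε) - (y s 1 - ystar s 1) ≤ U s := by
      intro s
      have hr := hyrow s
      have h1 := hpx' s
      have h4 := hpy s 1
      simp only [hU]
      split_ifs with h
      · have hm1 := hmle s 0 h
        refine le_min ?_ (le_min ?_ ?_) <;> linarith [h1.1, hκε, hε3, hε0.le, hy0 s 1]
      · have h0 : ystar s 0 = 0 := le_antisymm (not_lt.mp h) (hy0 s 0)
        refine le_min ?_ (le_min ?_ ?_) <;> linarith [h1.1, hκε, hε0.le]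
    have h1 := Finset.sum_le_sum (fun s (_ : s ∈ Finset.univ) => key s)
    rw [Finset.sum_sub_distrib, hsume, sub_zero] at h1
    refine le_trans ?_ h1
    obtain ⟨s0, hs0⟩ : ∃ s, 0 < ystar s 0 := by
      by_contra hcon
      push_neg at hcon
      have h2 : ∑ s, ystar s 0 = 0 :=
        Finset.sum_eq_zero (fun s _ => le_antisymm (hcon s) (hy0 s 0))
      have h3 : ∑ s, ystar s 0 + ∑ s, ystar s 1 = 1 := by
        rw [← Finset.sum_add_distrib]; exact hysum
      rw [h2, hyb] at h3; linarith
    have h5 : ∑ s ∈ Finset.univ.erase s0, (if 0 < ystar s 0 then (κ-1)*ε else -ε)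
        + (if 0 < ystar s0 0 then (κ-1)*ε else -ε)
        = ∑ s, (if 0 < ystar s 0 then (κ-1)*ε else -ε) :=
      Finset.sum_erase_add _ _ (Finset.mem_univ s0)
    rw [if_pos hs0] at h5
    have h6 : ∀ s ∈ Finset.univ.erase s0, -ε ≤ (if 0 < ystar s 0 then (κ-1)*ε else -ε) := by
      intro s _
      split_ifs
      · nlinarith
      · exact le_rfl
    have h7 := Finset.sum_le_sum h6
    rw [Finset.sum_const, nsmul_eq_mul, Finset.card_erase_of_mem (Finset.mem_univ s0),
      Finset.card_univ, Fintype.card_fin] at h7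
    have hc : ((S - 1 : ℕ) : ℝ) = (S:ℝ) - 1 := by
      rw [Nat.cast_sub hS, Nat.cast_one]
    rw [hc] at h7
    have h8 : 0 ≤ (κ - (S:ℝ)) * ε := mul_nonneg (by linarith) hε0.le
    nlinarith [h5, h7]
  have hLsum : ∑ s, L s ≤ 0 := by
    have key : ∀ s, L s ≤ (if 0 < ystar s 1 then (1 - κ) * ε else 0) - (y s 1 - ystar s 1) := by
      intro s
      have hr := hyrow s
      have h1 := hpx' s
      have h4 := hpy s 1
      have h3 := hpy s 0
      simp only [hL]
      split_ifs with h
      · have hm1 := hmle s 1 h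
        refine max_le ?_ (max_le ?_ ?_) <;> linarith [h1.2, hκε, hε3, hε0.le, hy0 s 0]
      · have h0 : ystar s 1 = 0 := le_antisymm (not_lt.mp h) (hy0 s 1)
        refine max_le ?_ (max_le ?_ ?_) <;> linarith [h1.2, hκε, hε0.le, hy0 s 0]
    have h1 := Finset.sum_le_sum (fun s (_ : s ∈ Finset.univ) => key s)
    rw [Finset.sum_sub_distrib, hsume, sub_zero] at h1
    refine h1.trans (Finset.sum_nonpos ?_)
    intro s _
    split_ifs
    · nlinarith
    · exact le_rfl
  -- correction amounts
  obtain ⟨R, hR⟩ : ∃ R : ℝ, R = -∑ s, a0 s := ⟨_, rfl⟩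
  have hRd : |R| ≤ (S:ℝ) * d := by
    rw [hR, abs_neg]
    calc |∑ s, a0 s| ≤ ∑ s, |a0 s| := Finset.abs_sum_le_sum_abs _ _
      _ ≤ ∑ _s : Fin S, d := Finset.sum_le_sum (fun s _ => abs_le.mpr ⟨(ha0d s).1, (ha0d s).2⟩)
      _ = (S:ℝ) * d := by
          rw [Finset.sum_const, Finset.card_univ, Fintype.card_fin, nsmul_eq_mul]
  obtain ⟨CU, hCU⟩ : ∃ c : ℝ, c = ∑ s, (U s - a0 s) := ⟨_, rfl⟩
  obtain ⟨CL, hCL⟩ : ∃ c : ℝ, c = ∑ s, (a0 s - L s) := ⟨_, rfl⟩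
  have hCU0 : 0 ≤ CU := hCU ▸ Finset.sum_nonneg (fun s _ => sub_nonneg.mpr (ha0U s))
  have hCL0 : 0 ≤ CL := hCL ▸ Finset.sum_nonneg (fun s _ => sub_nonneg.mpr (ha0L s))
  have hCUR : max R 0 ≤ CU := by
    have h1 : CU = ∑ s, U s + R := by rw [hCU, hR, Finset.sum_sub_distrib]; ring
    exact max_le (by linarith [hUsum]) hCU0
  have hCLR : max (-R) 0 ≤ CL := by
    have h1 : CL = -R - ∑ s, L s := by rw [hCL, hR, Finset.sum_sub_distrib]; ring
    exact max_le (by linarith [hLsum]) hCL0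
  obtain ⟨θp, hθp⟩ : ∃ t : ℝ, t = max R 0 / CU := ⟨_, rfl⟩
  obtain ⟨θm, hθm⟩ : ∃ t : ℝ, t = max (-R) 0 / CL := ⟨_, rfl⟩
  have hθp0 : 0 ≤ θp := hθp ▸ div_nonneg (le_max_right _ _) hCU0
  have hθm0 : 0 ≤ θm := hθm ▸ div_nonneg (le_max_right _ _) hCL0
  have hθpm : θp * CU = max R 0 := by
    rcases eq_or_lt_of_le hCU0 with h | h
    · rw [hθp, ← h, div_zero, zero_mul]
      exact (le_antisymm (h ▸ hCUR) (le_max_right _ _)).symm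
    · rw [hθp]; field_simp
  have hθmm : θm * CL = max (-R) 0 := by
    rcases eq_or_lt_of_le hCL0 with h | h
    · rw [hθm, ← h, div_zero, zero_mul]
      exact (le_antisymm (h ▸ hCLR) (le_max_right _ _)).symm
    · rw [hθm]; field_simp
  have hθp1 : θp ≤ 1 := by
    rcases eq_or_lt_of_le hCU0 with h | h
    · rw [hθp, ← h, div_zero]; exact zero_le_one
    · rw [hθp]; exact (div_le_one h).mpr hCUR
  have hθm1 : θm ≤ 1 := by
    rcases eq_or_lt_of_le hCL0 with h | h
    · rw [hθm, ← h, div_zero]; exact zero_le_one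
    · rw [hθm]; exact (div_le_one h).mpr hCLR
  have hSd0 : 0 ≤ (S:ℝ) * d := mul_nonneg (Nat.cast_nonneg S) hd0
  have hθpU : ∀ s, θp * (U s - a0 s) ≤ (S:ℝ) * d := by
    intro s
    have h1 : U s - a0 s ≤ CU := by
      rw [hCU]
      exact Finset.single_le_sum (fun i (_ : i ∈ Finset.univ) => sub_nonneg.mpr (ha0U i))
        (Finset.mem_univ s)
    have h2 : θp * (U s - a0 s) ≤ θp * CU := mul_le_mul_of_nonneg_left h1 hθp0
    have h3 : max R 0 ≤ (S:ℝ)*d := max_le ((le_abs_self R).trans hRd) hSd0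
    linarith [hθpm]
  have hθmL : ∀ s, θm * (a0 s - L s) ≤ (S:ℝ) * d := by
    intro s
    have h1 : a0 s - L s ≤ CL := by
      rw [hCL]
      exact Finset.single_le_sum (fun i (_ : i ∈ Finset.univ) => sub_nonneg.mpr (ha0L i))
        (Finset.mem_univ s)
    have h2 : θm * (a0 s - L s) ≤ θm * CL := mul_le_mul_of_nonneg_left h1 hθm0
    have h3 : max (-R) 0 ≤ (S:ℝ)*d := by
      refine max_le ?_ hSd0
      calc -R ≤ |(-R)| := le_abs_self _
        _ = |R| := abs_neg R
        _ ≤ (S:ℝ)*d := hRd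
    linarith [hθmm]
  -- the final change A
  obtain ⟨A, hA⟩ : ∃ A : Fin S → ℝ,
      A = fun s => a0 s + θp * (U s - a0 s) - θm * (a0 s - L s) := ⟨_, rfl⟩
  have hAL : ∀ s, L s ≤ A s := by
    intro s; simp only [hA]
    nlinarith [mul_nonneg hθp0 (sub_nonneg.mpr (ha0U s)),
      mul_nonneg (sub_nonneg.mpr hθm1) (sub_nonneg.mpr (ha0L s)), ha0L s]
  have hAU : ∀ s, A s ≤ U s := by
    intro s; simp only [hA]
    nlinarith [mul_nonneg hθm0 (sub_nonneg.mpr (ha0L s)),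
      mul_nonneg (sub_nonneg.mpr hθp1) (sub_nonneg.mpr (ha0U s)), ha0U s]
  have hAa0 : ∀ s, -((S:ℝ)*d) ≤ A s - a0 s ∧ A s - a0 s ≤ (S:ℝ)*d := by
    intro s
    constructor <;> simp only [hA] <;>
      linarith [hθpU s, hθmL s, mul_nonneg hθp0 (sub_nonneg.mpr (ha0U s)),
        mul_nonneg hθm0 (sub_nonneg.mpr (ha0L s))]
  have hsumA : ∑ s, A s = 0 := by
    have h1 : ∑ s, A s = ∑ s, a0 s + θp * CU - θm * CL := by
      simp only [hA, hCU, hCL]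
      rw [Finset.sum_sub_distrib, Finset.sum_add_distrib, ← Finset.mul_sum, ← Finset.mul_sum]
    rw [h1, hθpm, hθmm]
    rcases le_total 0 R with h | h
    · rw [max_eq_left h, max_eq_right (neg_nonpos.mpr h), hR]; ring
    · rw [max_eq_right h, max_eq_left (neg_nonneg.mpr h), hR]; ring
  -- the new action
  refine ⟨fun s a' => if a' = (1:Fin 2) then y s 1 + A s else y s 0 + (x' s - x s) - A s,
    ?_, ?_, ?_, ?_, ?_⟩
  · intro s a'
    by_cases h : a' = (1:Fin 2)
    · simp only [if_pos h]
      linarith [hAL s, hL1 s]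
    · simp only [if_neg h]
      linarith [hAU s, hU1 s, hyA s 0]
  · intro s
    simp only [if_neg (show ¬((0:Fin 2) = 1) by decide), if_pos (show (1:Fin 2) = 1 from rfl), if_true]
    linarith [hyrow s]
  · have h1 : ∑ s, (y s 1 + A s) = α := by
      rw [Finset.sum_add_distrib, hycol, hsumA, add_zero]
    simpa using h1
  · rw [pi_norm_le_iff_of_nonneg hκε]
    intro s
    rw [pi_norm_le_iff_of_nonneg hκε]
    intro a'
    simp only [Pi.sub_apply, Real.norm_eq_abs]
    rcases hfin2 a' with h | h <;> subst h
    · simp only [if_neg (show ¬((0:Fin 2) = 1) by decide)]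
      exact abs_le.mpr ⟨by linarith [hAU s, hU3 s], by linarith [hAL s, hL3 s]⟩
    · simp only [if_pos (show (1:Fin 2) = 1 from rfl), if_true]
      exact abs_le.mpr ⟨by linarith [hAL s, hL2 s], by linarith [hAU s, hU2 s]⟩
  · have hb : 0 ≤ ((S:ℝ)+1) * ‖x - x'‖ := mul_nonneg (by linarith) (norm_nonneg _)
    rw [pi_norm_le_iff_of_nonneg hb]
    intro s
    rw [pi_norm_le_iff_of_nonneg hb]
    intro a'
    simp only [Pi.sub_apply, Real.norm_eq_abs]
    rw [← hd]
    rcases hfin2 a' with h | h <;> subst h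
    · simp only [if_neg (show ¬((0:Fin 2) = 1) by decide)]
      have h1 := ha0δ s; have h2 := hAa0 s
      exact abs_le.mpr ⟨by linarith [h1.1, h2.2], by linarith [h1.2, h2.1]⟩
    · simp only [if_pos (show (1:Fin 2) = 1 from rfl), if_true]
      have h1 := ha0d s; have h2 := hAa0 s
      exact abs_le.mpr ⟨by linarith [h1.2, h2.2], by linarith [h1.1, h2.1]⟩
end

section
/- Assume F₁(x_ini) is nonempty and that y* = (y*_h)_{h=1}^H is the unique maximizer of R₁ over F₁(x_ini); set x*_h(s) := y*_h(s,0) + y*_h(s,1). For 1 ≤ h ≤ H and a stage-h action ȳ ∈ ℝ^{S×{0,1}} that is feasible at x*_h (i.e., ȳ has nonnegative entries, ȳ(s,0) + ȳ(s,1) = x*_h(s) for every s, and Σ_s ȳ(s,1) = α), define Q_h(ȳ) := Σ_{s,a} r_h(s,a)·ȳ(s,a) + max{R_{h+1}(y) : y ∈ F_{h+1}(x̄')} where x̄'(s') := Σ_{s,a} ȳ(s,a)·P_h(s'|s,a) (with the convention Q_H(ȳ) := Σ_{s,a} r_H(s,a)·ȳ(s,a)). Then for each h there exists σ > 0 such that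 Q_h(y*_h) − Q_h(ȳ) ≥ σ·‖y*_h − ȳ‖_∞ for every stage-h action ȳ feasible at x*_h. -/
/-- The stage-`h` fluid feasible set `F_h(x)`: tuples `(y_{h'})_{h'=h}^{H}` (encoded as an
`ℕ`-indexed family, only the coordinates `h ≤ h' ≤ H` being constrained) with nonnegative
entries, budget `Σ_s y_{h'}(s,1) = α` at every step, initial condition
`y_h(s,0) + y_h(s,1) = x(s)`, and flow conservation
`y_{h'+1}(s',0) + y_{h'+1}(s',1) = Σ_{s,a} y_{h'}(s,a)·P_{h'}(s'|s,a)`. -/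
def Feas (H S : ℕ) (α : ℝ) (P : ℕ → Fin S → Fin 2 → Fin S → ℝ)
    (h : ℕ) (x : Fin S → ℝ) (y : ℕ → Fin S → Fin 2 → ℝ) : Prop :=
  (∀ h' ∈ Finset.Icc h H, ∀ s, ∀ a, 0 ≤ y h' s a) ∧
  (∀ h' ∈ Finset.Icc h H, ∑ s, y h' s 1 = α) ∧
  (∀ s, y h s 0 + y h s 1 = x s) ∧
  (∀ h' ∈ Finset.Ico h H, ∀ s' : Fin S,
    y (h' + 1) s' 0 + y (h' + 1) s' 1 = ∑ s, ∑ a, y h' s a * P h' s a s')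

/-- The stage-`h` fluid objective `R_h(y) = Σ_{h'=h}^{H} Σ_{s,a} r_{h'}(s,a)·y_{h'}(s,a)`. -/
def Robj (H S : ℕ) (r : ℕ → Fin S → Fin 2 → ℝ) (h : ℕ)
    (y : ℕ → Fin S → Fin 2 → ℝ) : ℝ :=
  ∑ h' ∈ Finset.Icc h H, ∑ s, ∑ a, r h' s a * y h' s a

/-- The stage-`h` fluid Q-function:
`Q_h(ȳ) = Σ_{s,a} r_h(s,a)·ȳ(s,a) + max{R_{h+1}(y) : y ∈ F_{h+1}(x̄')}` where
`x̄'(s') = Σ_{s,a} ȳ(s,a)·P_h(s'|s,a)`, with the convention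
`Q_H(ȳ) = Σ_{s,a} r_H(s,a)·ȳ(s,a)`. -/
noncomputable def Qfl (H S : ℕ) (α : ℝ) (P : ℕ → Fin S → Fin 2 → Fin S → ℝ)
    (r : ℕ → Fin S → Fin 2 → ℝ) (h : ℕ) (ybar : Fin S → Fin 2 → ℝ) : ℝ :=
  (∑ s, ∑ a, r h s a * ybar s a) +
    if h < H then
      sSup {v : ℝ | ∃ y : ℕ → Fin S → Fin 2 → ℝ,
        Feas H S α P (h + 1) (fun s' => ∑ s, ∑ a, ybar s a * P h s a s') y ∧
        v = Robj H S r (h + 1) y}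
    else 0

open Finset

theorem lp_sharp {ι : Type*} [Fintype ι] (G : Set (ι → ℝ)) (hGc : IsCompact G)
    (hpos : ∀ p ∈ G, ∀ i, 0 ≤ p i)
    (pstar : ι → ℝ) (hps : pstar ∈ G)
    (haff : ∀ z : ι → ℝ, (∀ i, 0 ≤ z i) →
      z - pstar ∈ Submodule.span ℝ ((· - pstar) '' G) → z ∈ G)
    (c : (ι → ℝ) →ₗ[ℝ] ℝ)
    (hoptc : ∀ p ∈ G, c p ≤ c pstar)
    (huniqc : ∀ p ∈ G, c p = c pstar → p = pstar) :
    ∃ σ : ℝ, 0 < σ ∧ ∀ p ∈ G, σ * ‖pstar - p‖ ≤ c pstar - c p := by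
  classical
  set V : Submodule ℝ (ι → ℝ) := Submodule.span ℝ ((· - pstar) '' G) with hV
  set C : Set (ι → ℝ) :=
    {d | ‖d‖ = 1 ∧ d ∈ V ∧ ∀ i, pstar i = 0 → 0 ≤ d i} with hC
  have hCclosed : IsClosed C := by
    have h1 : IsClosed {d : ι → ℝ | ‖d‖ = 1} := isClosed_eq (continuous_norm) continuous_const
    have h2 : IsClosed (V : Set (ι → ℝ)) := Submodule.closed_of_finiteDimensional V
    have h3 : IsClosed {d : ι → ℝ | ∀ i, pstar i = 0 → 0 ≤ d i} := by
      have : {d : ι → ℝ | ∀ i, pstar i = 0 → 0 ≤ d i}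
          = ⋂ i, {d : ι → ℝ | pstar i = 0 → 0 ≤ d i} := by
        ext d; simp [Set.mem_iInter]
      rw [this]
      refine isClosed_iInter fun i => ?_
      by_cases hpi : pstar i = 0
      · have : {d : ι → ℝ | pstar i = 0 → 0 ≤ d i} = {d : ι → ℝ | 0 ≤ d i} := by
          ext d; simp [hpi]
        rw [this]
        exact isClosed_le continuous_const (continuous_apply i)
      · have : {d : ι → ℝ | pstar i = 0 → 0 ≤ d i} = Set.univ := by
          ext d; simp [hpi]
        rw [this]; exact isClosed_univ
    have : C = {d : ι → ℝ | ‖d‖ = 1} ∩ ((V : Set (ι → ℝ)) ∩ {d | ∀ i, pstar i = 0 → 0 ≤ d i}) := by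
      ext d; simp [hC, Set.mem_setOf_eq, and_assoc]
    rw [this]
    exact h1.inter (h2.inter h3)
  have hCcpt : IsCompact C := by
    refine Metric.isCompact_of_isClosed_isBounded hCclosed ?_
    refine (Metric.isBounded_iff_subset_closedBall 0).2 ⟨1, fun d hd => ?_⟩
    simp only [Metric.mem_closedBall, dist_zero_right]
    exact le_of_eq hd.1
  -- key: every d in C has c d < 0
  have key : ∀ d ∈ C, c d < 0 := by
    rintro d ⟨hd1, hdV, hdsign⟩
    -- find t > 0 with pstar + t • d nonneg
    obtain ⟨t, ht0, htz⟩ : ∃ t : ℝ, 0 < t ∧ ∀ i, 0 ≤ pstar i + t * d i := by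
      by_cases hex : (univ.filter (fun i => 0 < pstar i)).Nonempty
      · set t := (univ.filter (fun i => 0 < pstar i)).inf' hex pstar with htdef
        have ht0 : 0 < t := by
          rw [htdef, Finset.lt_inf'_iff]
          intro i hi; exact (Finset.mem_filter.mp hi).2
        refine ⟨t, ht0, fun i => ?_⟩
        rcases le_or_gt 0 (d i) with hdi | hdi
        · have := hpos pstar hps i
          nlinarith
        · have hpi : 0 < pstar i := by
            rcases eq_or_lt_of_le (hpos pstar hps i) with h | h
            · exact absurd (hdsign i h.symm) (not_le.mpr hdi)
            · exact h
          have hti : t ≤ pstar i := by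
            rw [htdef]
            exact Finset.inf'_le _ (Finset.mem_filter.mpr ⟨Finset.mem_univ i, hpi⟩)
          have hdib : |d i| ≤ 1 := by
            calc |d i| = ‖d i‖ := rfl
            _ ≤ ‖d‖ := norm_le_pi_norm d i
            _ = 1 := hd1
          have : -1 ≤ d i := by
            have := abs_le.mp hdib
            linarith [this.1]
          nlinarith
      · refine ⟨1, one_pos, fun i => ?_⟩
        have hpi : pstar i = 0 := by
          by_contra hne
          have : 0 < pstar i := lt_of_le_of_ne (hpos pstar hps i) (Ne.symm hne)
          exact hex ⟨i, Finset.mem_filter.mpr ⟨Finset.mem_univ i, this⟩⟩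
        have := hdsign i hpi
        rw [hpi]
        linarith
    have hz : (pstar + t • d) ∈ G := by
      refine haff _ (by simpa using htz) ?_
      have heqq : pstar + t • d - pstar = t • d := by abel
      rw [heqq]
      exact Submodule.smul_mem _ _ hdV
    have hle : c (pstar + t • d) ≤ c pstar := hoptc _ hz
    have hcz : c (pstar + t • d) = c pstar + t * c d := by
      simp [map_add, map_smul, smul_eq_mul]
    have hcd0 : c d ≤ 0 := by nlinarith
    rcases lt_or_eq_of_le hcd0 with h | h
    · exact h
    · exfalso
      have heq : c (pstar + t • d) = c pstar := by rw [hcz, h]; ring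
      have hzz := huniqc _ hz heq
      have hd0 : t • d = 0 := by
        calc t • d = pstar + t • d - pstar := by abel
        _ = pstar - pstar := by rw [hzz]
        _ = 0 := by abel
      have hdz : d = 0 := by
        rcases smul_eq_zero.mp hd0 with h' | h'
        · exact absurd h' (ne_of_gt ht0)
        · exact h'
      rw [hdz] at hd1
      simp at hd1
  by_cases hCne : C.Nonempty
  · obtain ⟨d₀, hd₀C, hd₀max⟩ := hCcpt.exists_isMaxOn hCne (c.continuous_of_finiteDimensional.continuousOn)
    refine ⟨-(c d₀), by linarith [key d₀ hd₀C], fun p hp => ?_⟩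
    by_cases hpe : p = pstar
    · simp [hpe]
    · have hr : 0 < ‖pstar - p‖ :=
        norm_pos_iff.mpr (sub_ne_zero.mpr (fun h => hpe h.symm))
      set rr := ‖pstar - p‖ with hrr
      set d := rr⁻¹ • (p - pstar) with hd
      have hdC : d ∈ C := by
        refine ⟨?_, ?_, ?_⟩
        · rw [hd, norm_smul]
          have h1 : ‖p - pstar‖ = rr := by rw [hrr]; exact norm_sub_rev _ _
          rw [h1, Real.norm_eq_abs, abs_of_pos (inv_pos.mpr hr)]
          field_simp
        · exact Submodule.smul_mem _ _ (Submodule.subset_span ⟨p, hp, rfl⟩)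
        · intro i hi
          have h0 := hpos p hp i
          have h1 : 0 ≤ p i - pstar i := by rw [hi]; simpa using h0
          have h2 := mul_nonneg (inv_nonneg.mpr hr.le) h1
          simpa [hd] using h2
      have hcd : c d ≤ c d₀ := hd₀max hdC
      have hcdval : c d = rr⁻¹ * (c p - c pstar) := by
        simp [hd, map_smul, map_sub, smul_eq_mul]
      have : rr⁻¹ * (c p - c pstar) ≤ c d₀ := hcdval ▸ hcd
      have h2 : c p - c pstar ≤ rr * c d₀ := by
        have := mul_le_mul_of_nonneg_left this hr.le
        field_simp at this
        nlinarith [this]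
      nlinarith
  · refine ⟨1, one_pos, fun p hp => ?_⟩
    have hpe : p = pstar := by
      by_contra hne
      apply hCne
      have hr : 0 < ‖pstar - p‖ :=
        norm_pos_iff.mpr (sub_ne_zero.mpr (fun h => hne h.symm))
      refine ⟨‖pstar - p‖⁻¹ • (p - pstar), ?_, ?_, ?_⟩
      · rw [norm_smul]
        have h1 : ‖p - pstar‖ = ‖pstar - p‖ := norm_sub_rev _ _
        rw [h1, Real.norm_eq_abs, abs_of_pos (inv_pos.mpr hr)]
        field_simp
      · exact Submodule.smul_mem _ _ (Submodule.subset_span ⟨p, hp, rfl⟩)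
      · intro i hi
        have h0 := hpos p hp i
        have : 0 ≤ p i - pstar i := by rw [hi]; simpa using h0
        exact mul_nonneg (inv_nonneg.mpr hr.le) this
    simp [hpe]

/-- mass conservation -/
lemma mass_lemma (H S : ℕ) (α : ℝ) (P : ℕ → Fin S → Fin 2 → Fin S → ℝ)
    (hP1 : ∀ h ∈ Finset.Ico 1 H, ∀ s a, ∑ s', P h s a s' = 1)
    (k : ℕ) (hk : 1 ≤ k) (x : Fin S → ℝ) (hx : ∑ s, x s = 1)
    (y : ℕ → Fin S → Fin 2 → ℝ) (hy : Feas H S α P k x y) :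
    ∀ h', k ≤ h' → h' ≤ H → ∑ s, (y h' s 0 + y h' s 1) = 1 := by
  obtain ⟨hpos, hbud, hini, hflow⟩ := hy
  intro h' hkh'
  induction h', hkh' using Nat.le_induction with
  | base =>
      intro _; simp only [hini]; exact hx
  | succ n hn ih =>
      intro hn1
      have hnH : n ≤ H := by omega
      have hnlt : n < H := by omega
      have hflown := hflow n (Finset.mem_Ico.mpr ⟨hn, hnlt⟩)
      calc ∑ s', (y (n+1) s' 0 + y (n+1) s' 1)
          = ∑ s', ∑ s, ∑ a, y n s a * P n s a s' := by
            refine Finset.sum_congr rfl fun s' _ => hflown s'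
        _ = ∑ s, ∑ a, ∑ s', y n s a * P n s a s' := by
            rw [Finset.sum_comm]
            refine Finset.sum_congr rfl fun s _ => Finset.sum_comm
        _ = ∑ s, ∑ a, y n s a := by
            refine Finset.sum_congr rfl fun s _ => Finset.sum_congr rfl fun a _ => ?_
            rw [← Finset.mul_sum, hP1 n (Finset.mem_Ico.mpr ⟨by omega, hnlt⟩) s a, mul_one]
        _ = ∑ s, (y n s 0 + y n s 1) := by
            refine Finset.sum_congr rfl fun s _ => ?_
            exact Fin.sum_univ_two _
        _ = 1 := ih hnH

/-- entries bounded by 1 -/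
lemma bound_lemma (H S : ℕ) (α : ℝ) (P : ℕ → Fin S → Fin 2 → Fin S → ℝ)
    (hP1 : ∀ h ∈ Finset.Ico 1 H, ∀ s a, ∑ s', P h s a s' = 1)
    (k : ℕ) (hk : 1 ≤ k) (x : Fin S → ℝ) (hx : ∑ s, x s = 1)
    (y : ℕ → Fin S → Fin 2 → ℝ) (hy : Feas H S α P k x y) :
    ∀ h' ∈ Finset.Icc k H, ∀ s a, y h' s a ≤ 1 := by
  intro h' hh' s a
  rw [Finset.mem_Icc] at hh'
  have hmass := mass_lemma H S α P hP1 k hk x hx y hy h' hh'.1 hh'.2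
  have hpos := hy.1 h' (Finset.mem_Icc.mpr hh')
  have h1 : y h' s a ≤ y h' s 0 + y h' s 1 := by
    have h0 := hpos s 0
    have hb := hpos s 1
    obtain ha | ha : a = 0 ∨ a = 1 := by omega
    · rw [ha]; linarith
    · rw [ha]; linarith
  have h2 : y h' s 0 + y h' s 1 ≤ 1 := by
    rw [← hmass]
    refine Finset.single_le_sum (f := fun s' => y h' s' 0 + y h' s' 1)
      (fun s' _ => ?_) (Finset.mem_univ s)
    show (0:ℝ) ≤ y h' s' 0 + y h' s' 1
    have := hpos s' 0; have := hpos s' 1; linarith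
  linarith

noncomputable def msr (S : ℕ) (α : ℝ) (P : ℕ → Fin S → Fin 2 → Fin S → ℝ)
    (k : ℕ) (x : Fin S → ℝ) : ℕ → Fin S → ℝ
  | 0 => x
  | (n+1) => fun s' => ∑ s,
      ((1-α) * msr S α P k x n s * P (k+n) s 0 s' + α * msr S α P k x n s * P (k+n) s 1 s')

/-- tail existence -/
lemma tail_exists (H S : ℕ) (α : ℝ) (hα : α ∈ Set.Ioo (0:ℝ) 1)
    (P : ℕ → Fin S → Fin 2 → Fin S → ℝ)
    (hP0 : ∀ h ∈ Finset.Ico 1 H, ∀ s a s', 0 ≤ P h s a s')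
    (hP1 : ∀ h ∈ Finset.Ico 1 H, ∀ s a, ∑ s', P h s a s' = 1)
    (k : ℕ) (hk : 1 ≤ k) (hkH : k ≤ H) (x : Fin S → ℝ)
    (hx0 : ∀ s, 0 ≤ x s) (hx1 : ∑ s, x s = 1) :
    ∃ y : ℕ → Fin S → Fin 2 → ℝ, Feas H S α P k x y := by
  obtain ⟨hα0, hα1⟩ := hα
  set μ := msr S α P k x with hμ
  -- nonneg and mass of μ n for k + n ≤ H
  have hμprop : ∀ n, k + n ≤ H → (∀ s, 0 ≤ μ n s) ∧ (∑ s, μ n s = 1) := by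
    intro n
    induction n with
    | zero => intro _; exact ⟨hx0, hx1⟩
    | succ m ih =>
        intro hle
        have hmH : k + m < H := by omega
        obtain ⟨ih0, ih1⟩ := ih (by omega)
        have hPmem : k + m ∈ Finset.Ico 1 H := Finset.mem_Ico.mpr ⟨by omega, hmH⟩
        constructor
        · intro s'
          refine Finset.sum_nonneg fun s _ => ?_
          have h0 := hP0 _ hPmem s 0 s'
          have h1 := hP0 _ hPmem s 1 s'
          have hms := ih0 s
          rw [hμ] at hms
          nlinarith [mul_nonneg (mul_nonneg (by linarith : (0:ℝ) ≤ 1-α) hms) h0,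
            mul_nonneg (mul_nonneg hα0.le hms) h1]
        · calc ∑ s', ∑ s, ((1-α) * μ m s * P (k+m) s 0 s' + α * μ m s * P (k+m) s 1 s')
              = ∑ s, ∑ s', ((1-α) * μ m s * P (k+m) s 0 s' + α * μ m s * P (k+m) s 1 s') :=
                Finset.sum_comm
            _ = ∑ s, ((1-α) * μ m s + α * μ m s) := by
                refine Finset.sum_congr rfl fun s _ => ?_
                rw [Finset.sum_add_distrib, ← Finset.mul_sum, ← Finset.mul_sum,
                  hP1 _ hPmem s 0, hP1 _ hPmem s 1, mul_one, mul_one]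
            _ = ∑ s, μ m s := by refine Finset.sum_congr rfl fun s _ => by ring
            _ = 1 := ih1
  set Y : ℕ → Fin S → Fin 2 → ℝ :=
    fun h' s a => if a = 0 then (1-α) * μ (h' - k) s else α * μ (h' - k) s with hYdef
  have hY0 : ∀ h' s, Y h' s 0 = (1-α) * μ (h' - k) s := by intro _ _; simp [hYdef]
  have hY1 : ∀ h' s, Y h' s 1 = α * μ (h' - k) s := by intro _ _; simp [hYdef]
  refine ⟨Y, ?_, ?_, ?_, ?_⟩
  · intro h' hh' s a
    rw [Finset.mem_Icc] at hh'
    have hnon := (hμprop (h' - k) (by omega)).1 s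
    obtain ha | ha : a = 0 ∨ a = 1 := by omega
    · rw [ha, hY0]; nlinarith
    · rw [ha, hY1]; nlinarith
  · intro h' hh'
    rw [Finset.mem_Icc] at hh'
    have hm := (hμprop (h' - k) (by omega)).2
    calc ∑ s, Y h' s 1 = ∑ s, α * μ (h' - k) s := Finset.sum_congr rfl fun s _ => hY1 h' s
    _ = α * ∑ s, μ (h' - k) s := by rw [Finset.mul_sum]
    _ = α := by rw [hm, mul_one]
  · intro s
    rw [hY0, hY1, Nat.sub_self]
    have h0 : μ 0 s = x s := rfl
    rw [h0]; ring
  · intro h' hh' s'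
    rw [Finset.mem_Ico] at hh'
    obtain ⟨hkh, hhH⟩ := hh'
    have hidx : h' + 1 - k = (h' - k) + 1 := by omega
    have hidx2 : k + (h' - k) = h' := by omega
    have hsucc : μ ((h' - k) + 1) s'
        = ∑ s, ((1-α) * μ (h' - k) s * P h' s 0 s' + α * μ (h' - k) s * P h' s 1 s') := by
      rw [hμ]
      show msr S α P k x ((h' - k) + 1) s' = _
      simp only [msr, hidx2]
    calc Y (h' + 1) s' 0 + Y (h' + 1) s' 1
        = μ (h' + 1 - k) s' := by rw [hY0, hY1]; ring
      _ = ∑ s, ((1-α) * μ (h' - k) s * P h' s 0 s' + α * μ (h' - k) s * P h' s 1 s') := by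
          rw [hidx, hsucc]
      _ = ∑ s, (Y h' s 0 * P h' s 0 s' + Y h' s 1 * P h' s 1 s') := by
          refine Finset.sum_congr rfl fun s _ => ?_
          rw [hY0, hY1]
      _ = ∑ s, ∑ a, Y h' s a * P h' s a s' := by
          refine Finset.sum_congr rfl fun s _ => ?_
          rw [Fin.sum_univ_two]

/-- Feasibility only depends on coordinates in `Icc k H`. -/
lemma feas_congr (H S : ℕ) (α : ℝ) (P : ℕ → Fin S → Fin 2 → Fin S → ℝ)
    (k : ℕ) (hkH : k ≤ H) (x : Fin S → ℝ) (y1 y2 : ℕ → Fin S → Fin 2 → ℝ)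
    (hagree : ∀ h' ∈ Finset.Icc k H, ∀ s a, y1 h' s a = y2 h' s a)
    (hy : Feas H S α P k x y1) : Feas H S α P k x y2 := by
  obtain ⟨hpos, hbud, hini, hflow⟩ := hy
  have hkk : k ∈ Finset.Icc k H := Finset.mem_Icc.mpr ⟨le_refl k, hkH⟩
  refine ⟨?_, ?_, ?_, ?_⟩
  · intro h' hh' s a; rw [← hagree h' hh' s a]; exact hpos h' hh' s a
  · intro h' hh'
    rw [← hbud h' hh']
    exact Finset.sum_congr rfl fun s _ => (hagree h' hh' s 1).symm
  · intro s
    rw [← hagree k hkk s 0, ← hagree k hkk s 1]; exact hini s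
  · intro h' hh' s'
    rw [Finset.mem_Ico] at hh'
    have h1 : h' ∈ Finset.Icc k H := Finset.mem_Icc.mpr ⟨hh'.1, hh'.2.le⟩
    have h2 : h' + 1 ∈ Finset.Icc k H := Finset.mem_Icc.mpr ⟨by omega, by omega⟩
    rw [← hagree (h'+1) h2 s' 0, ← hagree (h'+1) h2 s' 1]
    rw [hflow h' (Finset.mem_Ico.mpr hh') s']
    refine Finset.sum_congr rfl fun s _ => Finset.sum_congr rfl fun a _ => ?_
    rw [hagree h' h1 s a]

/-- The objective only depends on coordinates in `Icc k H`. -/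
lemma robj_congr (H S : ℕ) (r : ℕ → Fin S → Fin 2 → ℝ) (k : ℕ)
    (y1 y2 : ℕ → Fin S → Fin 2 → ℝ)
    (hagree : ∀ h' ∈ Finset.Icc k H, ∀ s a, y1 h' s a = y2 h' s a) :
    Robj H S r k y1 = Robj H S r k y2 := by
  unfold Robj
  refine Finset.sum_congr rfl fun h' hh' => Finset.sum_congr rfl fun s _ =>
    Finset.sum_congr rfl fun a _ => by rw [hagree h' hh' s a]

/-- splitting the objective at stage h -/
lemma robj_split (H S : ℕ) (r : ℕ → Fin S → Fin 2 → ℝ) (h : ℕ)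
    (h1 : 1 ≤ h) (hH : h ≤ H) (z : ℕ → Fin S → Fin 2 → ℝ) :
    Robj H S r 1 z = (∑ h' ∈ Finset.Icc 1 (h-1), ∑ s, ∑ a, r h' s a * z h' s a)
      + (∑ s, ∑ a, r h s a * z h s a) + Robj H S r (h+1) z := by
  unfold Robj
  have e1 : Finset.Icc 1 H = Finset.Ioc 0 H := by ext n; simp [Finset.mem_Icc, Finset.mem_Ioc]; omega
  have e2 : Finset.Icc 1 (h-1) = Finset.Ioc 0 (h-1) := by
    ext n; simp [Finset.mem_Icc, Finset.mem_Ioc]; omega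
  have e3 : Finset.Icc (h+1) H = Finset.Ioc h H := by
    ext n; simp [Finset.mem_Icc, Finset.mem_Ioc]
  have e4 : Finset.Ioc (h-1) h = {h} := by
    ext n; simp [Finset.mem_Ioc, Finset.mem_singleton]; omega
  rw [e1, e2, e3]
  set f : ℕ → ℝ := fun h' => ∑ s, ∑ a, r h' s a * z h' s a with hf
  have s1 : ∑ h' ∈ Finset.Ioc 0 (h-1), f h' + ∑ h' ∈ Finset.Ioc (h-1) H, f h'
      = ∑ h' ∈ Finset.Ioc 0 H, f h' := Finset.sum_Ioc_consecutive f (by omega) (by omega)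
  have s2 : ∑ h' ∈ Finset.Ioc (h-1) h, f h' + ∑ h' ∈ Finset.Ioc h H, f h'
      = ∑ h' ∈ Finset.Ioc (h-1) H, f h' := Finset.sum_Ioc_consecutive f (by omega) (by omega)
  have s3 : ∑ h' ∈ Finset.Ioc (h-1) h, f h' = f h := by rw [e4, Finset.sum_singleton]
  rw [← s1, ← s2, s3]
  simp only [hf]
  ring

/-- splicing a feasible action and tail into the optimal front -/
lemma splice (H S : ℕ) (α : ℝ) (P : ℕ → Fin S → Fin 2 → Fin S → ℝ)
    (xini : Fin S → ℝ) (ystar : ℕ → Fin S → Fin 2 → ℝ)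
    (hfeas : Feas H S α P 1 xini ystar)
    (h : ℕ) (h1 : 1 ≤ h) (hH : h ≤ H)
    (ybar : Fin S → Fin 2 → ℝ)
    (hb0 : ∀ s a, 0 ≤ ybar s a)
    (hbsum : ∀ s, ybar s 0 + ybar s 1 = ystar h s 0 + ystar h s 1)
    (hbbud : ∑ s, ybar s 1 = α)
    (w : ℕ → Fin S → Fin 2 → ℝ)
    (hw : h < H → Feas H S α P (h+1) (fun s' => ∑ s, ∑ a, ybar s a * P h s a s') w) :
    Feas H S α P 1 xini
      (fun h' => if h' < h then ystar h' else if h' = h then (fun s a => ybar s a) else w h') := by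
  obtain ⟨hpos, hbud, hini, hflow⟩ := hfeas
  refine ⟨?_, ?_, ?_, ?_⟩
  · intro h' hh' s a
    rw [Finset.mem_Icc] at hh'
    by_cases hc1 : h' < h
    · simp only [if_pos hc1]; exact hpos h' (Finset.mem_Icc.mpr ⟨hh'.1, hh'.2⟩) s a
    · by_cases hc2 : h' = h
      · simp only [if_neg hc1, if_pos hc2]; exact hb0 s a
      · have hlt : h < H := by omega
        simp only [if_neg hc1, if_neg hc2]
        exact (hw hlt).1 h' (Finset.mem_Icc.mpr ⟨by omega, hh'.2⟩) s a
  · intro h' hh'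
    rw [Finset.mem_Icc] at hh'
    by_cases hc1 : h' < h
    · simp only [if_pos hc1]; exact hbud h' (Finset.mem_Icc.mpr ⟨hh'.1, hh'.2⟩)
    · by_cases hc2 : h' = h
      · simp only [if_neg hc1, if_pos hc2]; exact hbbud
      · have hlt : h < H := by omega
        simp only [if_neg hc1, if_neg hc2]
        exact (hw hlt).2.1 h' (Finset.mem_Icc.mpr ⟨by omega, hh'.2⟩)
  · intro s
    by_cases hc1 : 1 < h
    · simp only [if_pos hc1]; exact hini s
    · have hc2 : h = 1 := by omega
      simp only [if_neg hc1, if_pos hc2.symm]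
      rw [hbsum s, hc2]
      exact hini s
  · intro h' hh' s'
    rw [Finset.mem_Ico] at hh'
    obtain ⟨hh1, hh2⟩ := hh'
    by_cases hc1 : h' + 1 < h
    · have hc0 : h' < h := by omega
      simp only [if_pos hc1, if_pos hc0]
      exact hflow h' (Finset.mem_Ico.mpr ⟨hh1, hh2⟩) s'
    · by_cases hc2 : h' + 1 = h
      · have hc0 : h' < h := by omega
        simp only [if_neg hc1, if_pos hc2, if_pos hc0]
        have hbs := hbsum s'
        have hfl := hflow h' (Finset.mem_Ico.mpr ⟨hh1, hh2⟩) s'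
        rw [← hc2] at hbs
        rw [hbs]
        exact hfl
      · by_cases hc3 : h' = h
        · have hd1 : ¬ (h' + 1 < h) := hc1
          have hd2 : ¬ (h' < h) := by omega
          simp only [if_neg hd1, if_neg hc2, if_neg hd2, if_pos hc3]
          have hlt : h < H := by omega
          subst hc3
          exact (hw hlt).2.2.1 s'
        · have hd2 : ¬ (h' < h) := by omega
          have hd4 : ¬ (h' + 1 = h) := hc2
          simp only [if_neg hc1, if_neg hd4, if_neg hd2, if_neg hc3]
          have hlt : h < H := by omega
          exact (hw hlt).2.2.2 h' (Finset.mem_Ico.mpr ⟨by omega, hh2⟩) s'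

abbrev Idx (H S h : ℕ) : Type :=
  (Fin S × Fin 2) ⊕ ({j : ℕ // j ∈ Finset.Icc (h+1) H} × (Fin S × Fin 2))

def liftA (H S h : ℕ) (p : Idx H S h → ℝ) : Fin S → Fin 2 → ℝ :=
  fun s a => p (Sum.inl (s, a))

def liftE (H S h : ℕ) (p : Idx H S h → ℝ) : ℕ → Fin S → Fin 2 → ℝ :=
  fun h' s a => if hj : h' ∈ Finset.Icc (h+1) H then p (Sum.inr (⟨h', hj⟩, (s, a))) else 0

def wgt (H S h : ℕ) (r : ℕ → Fin S → Fin 2 → ℝ) : Idx H S h → ℝ :=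
  Sum.elim (fun sa => r h sa.1 sa.2) (fun jsa => r (jsa.1 : ℕ) jsa.2.1 jsa.2.2)

def cmap {ι : Type*} [Fintype ι] (w : ι → ℝ) : (ι → ℝ) →ₗ[ℝ] ℝ where
  toFun p := ∑ i, w i * p i
  map_add' p q := by simp [mul_add, Finset.sum_add_distrib]
  map_smul' t p := by
    simp only [smul_eq_mul, RingHom.id_apply, Finset.mul_sum, Pi.smul_apply]
    exact Finset.sum_congr rfl fun i _ => by ring

lemma cval (H S h : ℕ) (r : ℕ → Fin S → Fin 2 → ℝ) (p : Idx H S h → ℝ) :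
    cmap (wgt H S h r) p
      = (∑ s, ∑ a, r h s a * liftA H S h p s a) + Robj H S r (h+1) (liftE H S h p) := by
  have e0 : cmap (wgt H S h r) p = ∑ i, wgt H S h r i * p i := rfl
  rw [e0, Fintype.sum_sum_type]
  congr 1
  · rw [Fintype.sum_prod_type]
    exact Finset.sum_congr rfl fun s _ => Finset.sum_congr rfl fun a _ => rfl
  · rw [Fintype.sum_prod_type]
    unfold Robj
    rw [← Finset.sum_coe_sort (Finset.Icc (h+1) H)
      (fun h' => ∑ s, ∑ a, r h' s a * liftE H S h p h' s a)]
    refine Finset.sum_congr rfl fun j _ => ?_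
    rw [Fintype.sum_prod_type]
    refine Finset.sum_congr rfl fun s _ => Finset.sum_congr rfl fun a _ => ?_
    show r (j:ℕ) s a * p (Sum.inr (j, (s, a))) = r (j:ℕ) s a * liftE H S h p (j:ℕ) s a
    rw [liftE, dif_pos j.2, Subtype.coe_eta]

def GSet (H S : ℕ) (α : ℝ) (P : ℕ → Fin S → Fin 2 → Fin S → ℝ) (h : ℕ)
    (xstar : Fin S → ℝ) : Set (Idx H S h → ℝ) :=
  {p | (∀ i, 0 ≤ p i) ∧
       (∀ s, p (Sum.inl (s, 0)) + p (Sum.inl (s, 1)) = xstar s) ∧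
       (∑ s, p (Sum.inl (s, 1)) = α) ∧
       (∀ j : {j : ℕ // j ∈ Finset.Icc (h+1) H}, ∑ s, p (Sum.inr (j, (s, 1))) = α) ∧
       (∀ j : {j : ℕ // j ∈ Finset.Icc (h+1) H}, (j:ℕ) = h+1 →
         ∀ s', p (Sum.inr (j, (s', 0))) + p (Sum.inr (j, (s', 1)))
           = ∑ s, ∑ a, p (Sum.inl (s, a)) * P h s a s') ∧
       (∀ j j' : {j : ℕ // j ∈ Finset.Icc (h+1) H}, (j':ℕ) = (j:ℕ)+1 →
         ∀ s', p (Sum.inr (j', (s', 0))) + p (Sum.inr (j', (s', 1)))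
           = ∑ s, ∑ a, p (Sum.inr (j, (s, a))) * P (j:ℕ) s a s')}

lemma GSet_iff (H S : ℕ) (α : ℝ) (P : ℕ → Fin S → Fin 2 → Fin S → ℝ) (h : ℕ)
    (hhH : h < H) (xstar : Fin S → ℝ) (p : Idx H S h → ℝ) :
    p ∈ GSet H S α P h xstar ↔
      (∀ i, 0 ≤ p i) ∧
      (∀ s, liftA H S h p s 0 + liftA H S h p s 1 = xstar s) ∧
      (∑ s, liftA H S h p s 1 = α) ∧
      Feas H S α P (h+1) (fun s' => ∑ s, ∑ a, liftA H S h p s a * P h s a s')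
        (liftE H S h p) := by
  constructor
  · rintro ⟨hp0, hsum, hbud, hbud', hini', hflow'⟩
    refine ⟨hp0, hsum, hbud, ?_, ?_, ?_, ?_⟩
    · intro h' hh' s a
      rw [liftE, dif_pos hh']
      exact hp0 _
    · intro h' hh'
      have := hbud' ⟨h', hh'⟩
      calc ∑ s, liftE H S h p h' s 1 = ∑ s, p (Sum.inr (⟨h', hh'⟩, (s, 1))) := by
            refine Finset.sum_congr rfl fun s _ => ?_
            rw [liftE, dif_pos hh']
        _ = α := this
    · intro s'
      have hmem : h + 1 ∈ Finset.Icc (h+1) H := Finset.mem_Icc.mpr ⟨le_refl _, by omega⟩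
      have := hini' ⟨h+1, hmem⟩ rfl s'
      simp only [liftE, dif_pos hmem]
      exact this
    · intro h' hh' s'
      rw [Finset.mem_Ico] at hh'
      have hm1 : h' ∈ Finset.Icc (h+1) H := Finset.mem_Icc.mpr ⟨hh'.1, hh'.2.le⟩
      have hm2 : h' + 1 ∈ Finset.Icc (h+1) H := Finset.mem_Icc.mpr ⟨by omega, by omega⟩
      have := hflow' ⟨h', hm1⟩ ⟨h'+1, hm2⟩ rfl s'
      simp only [liftE, dif_pos hm1, dif_pos hm2]
      exact this
  · rintro ⟨hp0, hsum, hbud, hfeas'⟩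
    obtain ⟨w0, w1, w2, w3⟩ := hfeas'
    refine ⟨hp0, hsum, hbud, ?_, ?_, ?_⟩
    · intro j
      have := w1 (j:ℕ) j.2
      calc ∑ s, p (Sum.inr (j, (s, 1))) = ∑ s, liftE H S h p (j:ℕ) s 1 := by
            refine Finset.sum_congr rfl fun s _ => ?_
            rw [liftE, dif_pos j.2, Subtype.coe_eta]
        _ = α := this
    · intro j hj s'
      have hmem : h + 1 ∈ Finset.Icc (h+1) H := Finset.mem_Icc.mpr ⟨le_refl _, by omega⟩
      have hjeq : j = ⟨h+1, hmem⟩ := Subtype.ext hj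
      have := w2 s'
      simp only [liftE, dif_pos hmem] at this
      rw [hjeq]
      calc p (Sum.inr (⟨h+1, hmem⟩, (s', 0))) + p (Sum.inr (⟨h+1, hmem⟩, (s', 1)))
          = ∑ s, ∑ a, liftA H S h p s a * P h s a s' := this
        _ = ∑ s, ∑ a, p (Sum.inl (s, a)) * P h s a s' := rfl
    · intro j j' hj' s'
      have hj2 := j.2
      have hj'2 := j'.2
      rw [Finset.mem_Icc] at hj2 hj'2
      have hmico : (j:ℕ) ∈ Finset.Ico (h+1) H := Finset.mem_Ico.mpr ⟨hj2.1, by omega⟩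
      have := w3 (j:ℕ) hmico s'
      have hm2 : (j:ℕ) + 1 ∈ Finset.Icc (h+1) H := Finset.mem_Icc.mpr ⟨by omega, by omega⟩
      simp only [liftE, dif_pos j.2, dif_pos hm2, Subtype.coe_eta] at this
      have hjeq : j' = ⟨(j:ℕ)+1, hm2⟩ := Subtype.ext hj'
      rw [hjeq]
      exact this

lemma GSet_closed (H S : ℕ) (α : ℝ) (P : ℕ → Fin S → Fin 2 → Fin S → ℝ) (h : ℕ)
    (xstar : Fin S → ℝ) : IsClosed (GSet H S α P h xstar) := by
  classical
  have hrw : GSet H S α P h xstar =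
      (⋂ i, {p : Idx H S h → ℝ | 0 ≤ p i}) ∩
      ((⋂ s, {p : Idx H S h → ℝ | p (Sum.inl (s, 0)) + p (Sum.inl (s, 1)) = xstar s}) ∩
       ({p : Idx H S h → ℝ | ∑ s, p (Sum.inl (s, 1)) = α} ∩
        ((⋂ j : {j : ℕ // j ∈ Finset.Icc (h+1) H},
            {p : Idx H S h → ℝ | ∑ s, p (Sum.inr (j, (s, 1))) = α}) ∩
         ((⋂ j : {j : ℕ // j ∈ Finset.Icc (h+1) H},
            {p : Idx H S h → ℝ | (j:ℕ) = h+1 →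
              ∀ s', p (Sum.inr (j, (s', 0))) + p (Sum.inr (j, (s', 1)))
                = ∑ s, ∑ a, p (Sum.inl (s, a)) * P h s a s'}) ∩
          (⋂ j : {j : ℕ // j ∈ Finset.Icc (h+1) H},
           ⋂ j' : {j : ℕ // j ∈ Finset.Icc (h+1) H},
            {p : Idx H S h → ℝ | (j':ℕ) = (j:ℕ)+1 →
              ∀ s', p (Sum.inr (j', (s', 0))) + p (Sum.inr (j', (s', 1)))
                = ∑ s, ∑ a, p (Sum.inr (j, (s, a))) * P (j:ℕ) s a s'}))))) := by
    ext p
    simp only [GSet, Set.mem_setOf_eq, Set.mem_inter_iff, Set.mem_iInter]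
  rw [hrw]
  have hca : ∀ i : Idx H S h, Continuous (fun p : Idx H S h → ℝ => p i) :=
    fun i => continuous_apply i
  refine (isClosed_iInter fun i => isClosed_le continuous_const (hca i)).inter
    (IsClosed.inter (isClosed_iInter fun s => isClosed_eq ((hca _).add (hca _)) continuous_const)
    (IsClosed.inter (isClosed_eq (continuous_finset_sum _ fun s _ => hca _) continuous_const)
    (IsClosed.inter (isClosed_iInter fun j =>
        isClosed_eq (continuous_finset_sum _ fun s _ => hca _) continuous_const)
    (IsClosed.inter ?_ ?_))))
  · refine isClosed_iInter fun j => ?_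
    by_cases hc : (j:ℕ) = h+1
    · have : {p : Idx H S h → ℝ | (j:ℕ) = h+1 →
          ∀ s', p (Sum.inr (j, (s', 0))) + p (Sum.inr (j, (s', 1)))
            = ∑ s, ∑ a, p (Sum.inl (s, a)) * P h s a s'}
          = ⋂ s', {p : Idx H S h → ℝ | p (Sum.inr (j, (s', 0))) + p (Sum.inr (j, (s', 1)))
            = ∑ s, ∑ a, p (Sum.inl (s, a)) * P h s a s'} := by
        ext p; simp [hc, Set.mem_iInter]
      rw [this]
      refine isClosed_iInter fun s' => isClosed_eq ((hca _).add (hca _))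
        (continuous_finset_sum _ fun s _ => continuous_finset_sum _ fun a _ =>
          (hca _).mul continuous_const)
    · have : {p : Idx H S h → ℝ | (j:ℕ) = h+1 →
          ∀ s', p (Sum.inr (j, (s', 0))) + p (Sum.inr (j, (s', 1)))
            = ∑ s, ∑ a, p (Sum.inl (s, a)) * P h s a s'} = Set.univ := by
        ext p; simp [hc]
      rw [this]; exact isClosed_univ
  · refine isClosed_iInter fun j => isClosed_iInter fun j' => ?_
    by_cases hc : (j':ℕ) = (j:ℕ)+1
    · have : {p : Idx H S h → ℝ | (j':ℕ) = (j:ℕ)+1 →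
          ∀ s', p (Sum.inr (j', (s', 0))) + p (Sum.inr (j', (s', 1)))
            = ∑ s, ∑ a, p (Sum.inr (j, (s, a))) * P (j:ℕ) s a s'}
          = ⋂ s', {p : Idx H S h → ℝ | p (Sum.inr (j', (s', 0))) + p (Sum.inr (j', (s', 1)))
            = ∑ s, ∑ a, p (Sum.inr (j, (s, a))) * P (j:ℕ) s a s'} := by
        ext p; simp [hc, Set.mem_iInter]
      rw [this]
      refine isClosed_iInter fun s' => isClosed_eq ((hca _).add (hca _))
        (continuous_finset_sum _ fun s _ => continuous_finset_sum _ fun a _ =>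
          (hca _).mul continuous_const)
    · have : {p : Idx H S h → ℝ | (j':ℕ) = (j:ℕ)+1 →
          ∀ s', p (Sum.inr (j', (s', 0))) + p (Sum.inr (j', (s', 1)))
            = ∑ s, ∑ a, p (Sum.inr (j, (s, a))) * P (j:ℕ) s a s'} = Set.univ := by
        ext p; simp [hc]
      rw [this]; exact isClosed_univ

lemma GSet_le_one (H S : ℕ) (α : ℝ) (P : ℕ → Fin S → Fin 2 → Fin S → ℝ)
    (hP1 : ∀ h ∈ Finset.Ico 1 H, ∀ s a, ∑ s', P h s a s' = 1)
    (h : ℕ) (h1 : 1 ≤ h) (hhH : h ≤ H)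
    (xstar : Fin S → ℝ) (hxs1 : ∑ s, xstar s = 1)
    (p : Idx H S h → ℝ) (hp : p ∈ GSet H S α P h xstar) :
    ∀ i, p i ≤ 1 := by
  obtain ⟨hp0, hsum, hbud, hbud', hini', hflow'⟩ := hp
  have hA1 : ∀ s a, p (Sum.inl (s, a)) ≤ 1 := by
    intro s a
    have h1' : p (Sum.inl (s, a)) ≤ p (Sum.inl (s, 0)) + p (Sum.inl (s, 1)) := by
      have q0 := hp0 (Sum.inl (s, 0))
      have q1 := hp0 (Sum.inl (s, 1))
      obtain ha | ha : a = 0 ∨ a = 1 := by omega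
      · rw [ha]; linarith
      · rw [ha]; linarith
    rw [hsum s] at h1'
    have h2' : xstar s ≤ 1 := by
      rw [← hxs1]
      refine Finset.single_le_sum (f := fun s => xstar s) (fun s' _ => ?_) (Finset.mem_univ s)
      show (0:ℝ) ≤ xstar s'
      rw [← hsum s']
      have := hp0 (Sum.inl (s', 0)); have := hp0 (Sum.inl (s', 1)); linarith
    linarith
  intro i
  match i with
  | Sum.inl (s, a) => exact hA1 s a
  | Sum.inr (j, (s, a)) =>
    have hj2 := j.2
    rw [Finset.mem_Icc] at hj2
    have hlt : h < H := by omega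
    have hfeas' : Feas H S α P (h+1) (fun s' => ∑ s, ∑ a, liftA H S h p s a * P h s a s')
        (liftE H S h p) :=
      ((GSet_iff H S α P h hlt xstar p).mp ⟨hp0, hsum, hbud, hbud', hini', hflow'⟩).2.2.2
    have hx'1 : ∑ s', (∑ s, ∑ a, liftA H S h p s a * P h s a s') = 1 := by
      rw [Finset.sum_comm]
      have : ∀ s ∈ Finset.univ, ∑ s' : Fin S, ∑ a, liftA H S h p s a * P h s a s'
          = liftA H S h p s 0 + liftA H S h p s 1 := by
        intro s _
        rw [Finset.sum_comm]
        rw [Fin.sum_univ_two]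
        rw [← Finset.mul_sum, ← Finset.mul_sum,
          hP1 h (Finset.mem_Ico.mpr ⟨h1, hlt⟩) s 0, hP1 h (Finset.mem_Ico.mpr ⟨h1, hlt⟩) s 1]
        ring
      rw [Finset.sum_congr rfl this]
      have : ∀ s ∈ Finset.univ, liftA H S h p s 0 + liftA H S h p s 1 = xstar s :=
        fun s _ => hsum s
      rw [Finset.sum_congr rfl this, hxs1]
    have hb := bound_lemma H S α P hP1 (h+1) (by omega) _ hx'1 (liftE H S h p) hfeas'
      (j:ℕ) (Finset.mem_Icc.mpr ⟨hj2.1, hj2.2⟩) s a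
    rw [liftE, dif_pos j.2, Subtype.coe_eta] at hb
    exact hb

lemma GSet_compact (H S : ℕ) (α : ℝ) (P : ℕ → Fin S → Fin 2 → Fin S → ℝ)
    (hP1 : ∀ h ∈ Finset.Ico 1 H, ∀ s a, ∑ s', P h s a s' = 1)
    (h : ℕ) (h1 : 1 ≤ h) (hhH : h ≤ H)
    (xstar : Fin S → ℝ) (hxs1 : ∑ s, xstar s = 1) :
    IsCompact (GSet H S α P h xstar) := by
  refine Metric.isCompact_of_isClosed_isBounded (GSet_closed H S α P h xstar) ?_
  refine (Metric.isBounded_iff_subset_closedBall 0).2 ⟨1, fun p hp => ?_⟩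
  simp only [Metric.mem_closedBall, dist_zero_right]
  refine pi_norm_le_iff_of_nonneg zero_le_one |>.mpr fun i => ?_
  rw [Real.norm_eq_abs, abs_le]
  constructor
  · have := hp.1 i; linarith
  · exact GSet_le_one H S α P hP1 h h1 hhH xstar hxs1 p hp i

lemma GSet_span (H S : ℕ) (α : ℝ) (P : ℕ → Fin S → Fin 2 → Fin S → ℝ) (h : ℕ)
    (xstar : Fin S → ℝ) (pstar : Idx H S h → ℝ)
    (hps : pstar ∈ GSet H S α P h xstar) :
    ∀ v ∈ Submodule.span ℝ ((· - pstar) '' GSet H S α P h xstar),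
      (∀ s, v (Sum.inl (s, 0)) + v (Sum.inl (s, 1)) = 0) ∧
      (∑ s, v (Sum.inl (s, 1)) = 0) ∧
      (∀ j : {j : ℕ // j ∈ Finset.Icc (h+1) H}, ∑ s, v (Sum.inr (j, (s, 1))) = 0) ∧
      (∀ j : {j : ℕ // j ∈ Finset.Icc (h+1) H}, (j:ℕ) = h+1 →
        ∀ s', v (Sum.inr (j, (s', 0))) + v (Sum.inr (j, (s', 1)))
          = ∑ s, ∑ a, v (Sum.inl (s, a)) * P h s a s') ∧
      (∀ j j' : {j : ℕ // j ∈ Finset.Icc (h+1) H}, (j':ℕ) = (j:ℕ)+1 →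
        ∀ s', v (Sum.inr (j', (s', 0))) + v (Sum.inr (j', (s', 1)))
          = ∑ s, ∑ a, v (Sum.inr (j, (s, a))) * P (j:ℕ) s a s') := by
  intro v hv
  induction hv using Submodule.span_induction with
  | mem x hx =>
    obtain ⟨q, hq, rfl⟩ := hx
    obtain ⟨q0, qsum, qbud, qbud', qini', qflow'⟩ := hq
    obtain ⟨p0, psum, pbud, pbud', pini', pflow'⟩ := hps
    refine ⟨?_, ?_, ?_, ?_, ?_⟩
    · intro s
      simp only [Pi.sub_apply]
      rw [show q (Sum.inl (s,0)) - pstar (Sum.inl (s,0)) + (q (Sum.inl (s,1)) - pstar (Sum.inl (s,1)))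
        = (q (Sum.inl (s,0)) + q (Sum.inl (s,1))) - (pstar (Sum.inl (s,0)) + pstar (Sum.inl (s,1))) from by ring,
        qsum s, psum s, sub_self]
    · simp only [Pi.sub_apply]
      rw [Finset.sum_sub_distrib, qbud, pbud, sub_self]
    · intro j
      simp only [Pi.sub_apply]
      rw [Finset.sum_sub_distrib, qbud' j, pbud' j, sub_self]
    · intro j hj s'
      simp only [Pi.sub_apply]
      rw [show q (Sum.inr (j,(s',0))) - pstar (Sum.inr (j,(s',0)))
        + (q (Sum.inr (j,(s',1))) - pstar (Sum.inr (j,(s',1))))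
        = (q (Sum.inr (j,(s',0))) + q (Sum.inr (j,(s',1))))
          - (pstar (Sum.inr (j,(s',0))) + pstar (Sum.inr (j,(s',1)))) from by ring,
        qini' j hj s', pini' j hj s']
      rw [← Finset.sum_sub_distrib]
      refine Finset.sum_congr rfl fun s _ => ?_
      rw [← Finset.sum_sub_distrib]
      refine Finset.sum_congr rfl fun a _ => ?_
      ring
    · intro j j' hj s'
      simp only [Pi.sub_apply]
      rw [show q (Sum.inr (j',(s',0))) - pstar (Sum.inr (j',(s',0)))
        + (q (Sum.inr (j',(s',1))) - pstar (Sum.inr (j',(s',1))))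
        = (q (Sum.inr (j',(s',0))) + q (Sum.inr (j',(s',1))))
          - (pstar (Sum.inr (j',(s',0))) + pstar (Sum.inr (j',(s',1)))) from by ring,
        qflow' j j' hj s', pflow' j j' hj s']
      rw [← Finset.sum_sub_distrib]
      refine Finset.sum_congr rfl fun s _ => ?_
      rw [← Finset.sum_sub_distrib]
      refine Finset.sum_congr rfl fun a _ => ?_
      ring
  | zero =>
    exact ⟨fun s => by simp, by simp, fun j => by simp, fun j hj s' => by simp, fun j j' hj s' => by simp⟩
  | add x y hx hy ihx ihy =>
    obtain ⟨x1, x2, x3, x4, x5⟩ := ihx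
    obtain ⟨y1, y2, y3, y4, y5⟩ := ihy
    refine ⟨?_, ?_, ?_, ?_, ?_⟩
    · intro s; simp only [Pi.add_apply]; have := x1 s; have := y1 s; linarith
    · simp only [Pi.add_apply]; rw [Finset.sum_add_distrib, x2, y2, add_zero]
    · intro j; simp only [Pi.add_apply]; rw [Finset.sum_add_distrib, x3 j, y3 j, add_zero]
    · intro j hj s'
      simp only [Pi.add_apply]
      rw [show x (Sum.inr (j,(s',0))) + y (Sum.inr (j,(s',0))) + (x (Sum.inr (j,(s',1))) + y (Sum.inr (j,(s',1))))
        = (x (Sum.inr (j,(s',0))) + x (Sum.inr (j,(s',1)))) + (y (Sum.inr (j,(s',0))) + y (Sum.inr (j,(s',1)))) from by ring,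
        x4 j hj s', y4 j hj s', ← Finset.sum_add_distrib]
      refine Finset.sum_congr rfl fun s _ => ?_
      rw [← Finset.sum_add_distrib]
      refine Finset.sum_congr rfl fun a _ => by ring
    · intro j j' hj s'
      simp only [Pi.add_apply]
      rw [show x (Sum.inr (j',(s',0))) + y (Sum.inr (j',(s',0))) + (x (Sum.inr (j',(s',1))) + y (Sum.inr (j',(s',1))))
        = (x (Sum.inr (j',(s',0))) + x (Sum.inr (j',(s',1)))) + (y (Sum.inr (j',(s',0))) + y (Sum.inr (j',(s',1)))) from by ring,
        x5 j j' hj s', y5 j j' hj s', ← Finset.sum_add_distrib]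
      refine Finset.sum_congr rfl fun s _ => ?_
      rw [← Finset.sum_add_distrib]
      refine Finset.sum_congr rfl fun a _ => by ring
  | smul t x hx ih =>
    obtain ⟨x1, x2, x3, x4, x5⟩ := ih
    refine ⟨?_, ?_, ?_, ?_, ?_⟩
    · intro s
      simp only [Pi.smul_apply, smul_eq_mul]
      calc t * x (Sum.inl (s,0)) + t * x (Sum.inl (s,1))
          = t * (x (Sum.inl (s,0)) + x (Sum.inl (s,1))) := by ring
        _ = 0 := by rw [x1 s]; ring
    · simp only [Pi.smul_apply, smul_eq_mul]; rw [← Finset.mul_sum, x2, mul_zero]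
    · intro j; simp only [Pi.smul_apply, smul_eq_mul]; rw [← Finset.mul_sum, x3 j, mul_zero]
    · intro j hj s'
      simp only [Pi.smul_apply, smul_eq_mul]
      rw [show t * x (Sum.inr (j,(s',0))) + t * x (Sum.inr (j,(s',1)))
        = t * (x (Sum.inr (j,(s',0))) + x (Sum.inr (j,(s',1)))) from by ring,
        x4 j hj s', Finset.mul_sum]
      refine Finset.sum_congr rfl fun s _ => ?_
      rw [Finset.mul_sum]
      refine Finset.sum_congr rfl fun a _ => by ring
    · intro j j' hj s'
      simp only [Pi.smul_apply, smul_eq_mul]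
      rw [show t * x (Sum.inr (j',(s',0))) + t * x (Sum.inr (j',(s',1)))
        = t * (x (Sum.inr (j',(s',0))) + x (Sum.inr (j',(s',1)))) from by ring,
        x5 j j' hj s', Finset.mul_sum]
      refine Finset.sum_congr rfl fun s _ => ?_
      rw [Finset.mul_sum]
      refine Finset.sum_congr rfl fun a _ => by ring

lemma GSet_haff (H S : ℕ) (α : ℝ) (P : ℕ → Fin S → Fin 2 → Fin S → ℝ) (h : ℕ)
    (xstar : Fin S → ℝ) (pstar : Idx H S h → ℝ)
    (hps : pstar ∈ GSet H S α P h xstar) :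
    ∀ z : Idx H S h → ℝ, (∀ i, 0 ≤ z i) →
      z - pstar ∈ Submodule.span ℝ ((· - pstar) '' GSet H S α P h xstar) →
      z ∈ GSet H S α P h xstar := by
  intro z hz0 hzspan
  obtain ⟨v1, v2, v3, v4, v5⟩ := GSet_span H S α P h xstar pstar hps _ hzspan
  obtain ⟨p0, psum, pbud, pbud', pini', pflow'⟩ := hps
  have hzi : ∀ i, z i = pstar i + (z - pstar) i := fun i => by simp
  refine ⟨hz0, ?_, ?_, ?_, ?_, ?_⟩
  · intro s
    rw [hzi (Sum.inl (s,0)), hzi (Sum.inl (s,1))]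
    have := v1 s; have := psum s; linarith
  · rw [Finset.sum_congr rfl fun s (_ : s ∈ Finset.univ) => hzi (Sum.inl (s,1)),
      Finset.sum_add_distrib, pbud, v2, add_zero]
  · intro j
    rw [Finset.sum_congr rfl fun s (_ : s ∈ Finset.univ) => hzi (Sum.inr (j,(s,1))),
      Finset.sum_add_distrib, pbud' j, v3 j, add_zero]
  · intro j hj s'
    rw [hzi (Sum.inr (j,(s',0))), hzi (Sum.inr (j,(s',1)))]
    rw [show pstar (Sum.inr (j,(s',0))) + (z-pstar) (Sum.inr (j,(s',0)))
      + (pstar (Sum.inr (j,(s',1))) + (z-pstar) (Sum.inr (j,(s',1))))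
      = (pstar (Sum.inr (j,(s',0))) + pstar (Sum.inr (j,(s',1))))
        + ((z-pstar) (Sum.inr (j,(s',0))) + (z-pstar) (Sum.inr (j,(s',1)))) from by ring,
      pini' j hj s', v4 j hj s', ← Finset.sum_add_distrib]
    refine Finset.sum_congr rfl fun s _ => ?_
    rw [← Finset.sum_add_distrib]
    refine Finset.sum_congr rfl fun a _ => ?_
    rw [hzi (Sum.inl (s,a))]
    ring
  · intro j j' hj s'
    rw [hzi (Sum.inr (j',(s',0))), hzi (Sum.inr (j',(s',1)))]
    rw [show pstar (Sum.inr (j',(s',0))) + (z-pstar) (Sum.inr (j',(s',0)))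
      + (pstar (Sum.inr (j',(s',1))) + (z-pstar) (Sum.inr (j',(s',1))))
      = (pstar (Sum.inr (j',(s',0))) + pstar (Sum.inr (j',(s',1))))
        + ((z-pstar) (Sum.inr (j',(s',0))) + (z-pstar) (Sum.inr (j',(s',1)))) from by ring,
      pflow' j j' hj s', v5 j j' hj s', ← Finset.sum_add_distrib]
    refine Finset.sum_congr rfl fun s _ => ?_
    rw [← Finset.sum_add_distrib]
    refine Finset.sum_congr rfl fun a _ => ?_
    rw [hzi (Sum.inr (j,(s,a)))]
    ring

lemma exists_opt (H S : ℕ) (α : ℝ) (hα : α ∈ Set.Ioo (0:ℝ) 1)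
    (P : ℕ → Fin S → Fin 2 → Fin S → ℝ)
    (hP0 : ∀ h ∈ Finset.Ico 1 H, ∀ s a s', 0 ≤ P h s a s')
    (hP1 : ∀ h ∈ Finset.Ico 1 H, ∀ s a, ∑ s', P h s a s' = 1)
    (r : ℕ → Fin S → Fin 2 → ℝ)
    (h : ℕ) (h1 : 1 ≤ h) (hle : h ≤ H)
    (xstar : Fin S → ℝ) (hxs0 : ∀ s, 0 ≤ xstar s) (hxs1 : ∑ s, xstar s = 1)
    (ybar : Fin S → Fin 2 → ℝ) (hb0 : ∀ s a, 0 ≤ ybar s a)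
    (hbsum : ∀ s, ybar s 0 + ybar s 1 = xstar s) (hbbud : ∑ s, ybar s 1 = α) :
    ∃ p₀ ∈ GSet H S α P h xstar, (∀ s a, liftA H S h p₀ s a = ybar s a) ∧
      Qfl H S α P r h ybar = cmap (wgt H S h r) p₀ ∧
      ∀ q ∈ GSet H S α P h xstar, (∀ s a, liftA H S h q s a = ybar s a) →
        cmap (wgt H S h r) q ≤ cmap (wgt H S h r) p₀ := by
  classical
  by_cases hlt : h < H
  · -- pushed-forward state
    set x' : Fin S → ℝ := fun s' => ∑ s, ∑ a, ybar s a * P h s a s' with hx'def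
    have hhIco : h ∈ Finset.Ico 1 H := Finset.mem_Ico.mpr ⟨h1, hlt⟩
    have hx'1 : ∑ s', x' s' = 1 := by
      rw [hx'def]
      rw [Finset.sum_comm]
      have e1 : ∀ s ∈ Finset.univ, (∑ s' : Fin S, ∑ a, ybar s a * P h s a s')
          = ybar s 0 + ybar s 1 := by
        intro s _
        rw [Finset.sum_comm, Fin.sum_univ_two, ← Finset.mul_sum, ← Finset.mul_sum,
          hP1 h hhIco s 0, hP1 h hhIco s 1]
        ring
      rw [Finset.sum_congr rfl e1, Finset.sum_congr rfl fun s _ => hbsum s, hxs1]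
    have hx'0 : ∀ s', 0 ≤ x' s' := by
      intro s'
      refine Finset.sum_nonneg fun s _ => Finset.sum_nonneg fun a _ =>
        mul_nonneg (hb0 s a) (hP0 h hhIco s a s')
    -- the restricted feasible set
    set Gy : Set (Idx H S h → ℝ) :=
      {p | p ∈ GSet H S α P h xstar ∧ ∀ s a, liftA H S h p s a = ybar s a} with hGydef
    have hGyclosed : IsClosed Gy := by
      have : Gy = GSet H S α P h xstar ∩
          ⋂ s, ⋂ a, {p : Idx H S h → ℝ | liftA H S h p s a = ybar s a} := by
        ext p; simp only [hGydef, Set.mem_setOf_eq, Set.mem_inter_iff, Set.mem_iInter]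
      rw [this]
      exact (GSet_closed H S α P h xstar).inter (isClosed_iInter fun s =>
        isClosed_iInter fun a => isClosed_eq (continuous_apply _) continuous_const)
    have hGycpt : IsCompact Gy := by
      refine (GSet_compact H S α P hP1 h h1 hle xstar hxs1).of_isClosed_subset hGyclosed ?_
      intro p hp; exact hp.1
    -- build a member of Gy from a feasible tail
    have hmk : ∀ y : ℕ → Fin S → Fin 2 → ℝ, Feas H S α P (h+1) x' y →
        (Sum.elim (fun sa => ybar sa.1 sa.2)
          (fun jsa : {j : ℕ // j ∈ Finset.Icc (h+1) H} × (Fin S × Fin 2) =>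
            y (jsa.1 : ℕ) jsa.2.1 jsa.2.2) ∈ Gy) ∧
        Robj H S r (h+1) (liftE H S h (Sum.elim (fun sa => ybar sa.1 sa.2)
          (fun jsa : {j : ℕ // j ∈ Finset.Icc (h+1) H} × (Fin S × Fin 2) =>
            y (jsa.1 : ℕ) jsa.2.1 jsa.2.2))) = Robj H S r (h+1) y := by
      intro y hy
      set p : Idx H S h → ℝ := Sum.elim (fun sa => ybar sa.1 sa.2)
        (fun jsa : {j : ℕ // j ∈ Finset.Icc (h+1) H} × (Fin S × Fin 2) =>
          y (jsa.1 : ℕ) jsa.2.1 jsa.2.2) with hpdef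
      have hagree : ∀ h' ∈ Finset.Icc (h+1) H, ∀ s a, y h' s a = liftE H S h p h' s a := by
        intro h' hh' s a
        rw [liftE, dif_pos hh']
        rfl
      have hfeasE : Feas H S α P (h+1) x' (liftE H S h p) :=
        feas_congr H S α P (h+1) (by omega) x' y (liftE H S h p) hagree hy
      have hmem : p ∈ GSet H S α P h xstar := by
        rw [GSet_iff H S α P h hlt]
        refine ⟨?_, ?_, ?_, ?_⟩
        · intro i
          match i with
          | Sum.inl (s, a) => exact hb0 s a
          | Sum.inr (j, (s, a)) => exact hy.1 (j:ℕ) j.2 s a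
        · intro s; exact hbsum s
        · exact hbbud
        · exact hfeasE
      refine ⟨⟨hmem, fun s a => rfl⟩, ?_⟩
      exact (robj_congr H S r (h+1) y (liftE H S h p) hagree).symm
    -- Gy is nonempty
    obtain ⟨y0, hy0⟩ := tail_exists H S α hα P hP0 hP1 (h+1) (by omega) (by omega) x' hx'0 hx'1
    have hGyne : Gy.Nonempty := ⟨_, (hmk y0 hy0).1⟩
    -- continuity of the tail objective
    have hcont : Continuous (fun p : Idx H S h → ℝ => Robj H S r (h+1) (liftE H S h p)) := by
      unfold Robj
      refine continuous_finset_sum _ fun h' hh' => continuous_finset_sum _ fun s _ =>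
        continuous_finset_sum _ fun a _ => ?_
      have : (fun p : Idx H S h → ℝ => r h' s a * liftE H S h p h' s a)
          = fun p => r h' s a * p (Sum.inr (⟨h', hh'⟩, (s, a))) := by
        funext p
        rw [liftE, dif_pos hh']
      rw [this]
      exact continuous_const.mul (continuous_apply _)
    -- attain the max
    obtain ⟨p₀, hp₀Gy, hp₀max⟩ := hGycpt.exists_isMaxOn hGyne hcont.continuousOn
    -- the value set of Qfl is the image of Gy
    have hVset : {v : ℝ | ∃ y : ℕ → Fin S → Fin 2 → ℝ,
        Feas H S α P (h + 1) (fun s' => ∑ s, ∑ a, ybar s a * P h s a s') y ∧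
        v = Robj H S r (h + 1) y}
        = (fun p => Robj H S r (h+1) (liftE H S h p)) '' Gy := by
      ext v
      constructor
      · rintro ⟨y, hy, rfl⟩
        exact ⟨_, (hmk y hy).1, (hmk y hy).2⟩
      · rintro ⟨p, hp, rfl⟩
        refine ⟨liftE H S h p, ?_, rfl⟩
        have := ((GSet_iff H S α P h hlt xstar p).mp hp.1).2.2.2
        have hxeq : (fun s' => ∑ s, ∑ a, liftA H S h p s a * P h s a s')
            = (fun s' => ∑ s, ∑ a, ybar s a * P h s a s') := by
          funext s'
          exact Finset.sum_congr rfl fun s _ => Finset.sum_congr rfl fun a _ => by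
            rw [hp.2 s a]
        rw [hxeq] at this
        exact this
    have hsup : sSup {v : ℝ | ∃ y : ℕ → Fin S → Fin 2 → ℝ,
        Feas H S α P (h + 1) (fun s' => ∑ s, ∑ a, ybar s a * P h s a s') y ∧
        v = Robj H S r (h + 1) y} = Robj H S r (h+1) (liftE H S h p₀) := by
      rw [hVset]
      refine IsGreatest.csSup_eq ⟨⟨p₀, hp₀Gy, rfl⟩, ?_⟩
      rintro v ⟨p, hp, rfl⟩
      exact hp₀max hp
    refine ⟨p₀, hp₀Gy.1, hp₀Gy.2, ?_, ?_⟩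
    · rw [Qfl, if_pos hlt, hsup, cval H S h r p₀]
      congr 1
      exact Finset.sum_congr rfl fun s _ => Finset.sum_congr rfl fun a _ => by
        rw [hp₀Gy.2 s a]
    · intro q hq hqA
      rw [cval H S h r q, cval H S h r p₀]
      have h1' : (∑ s, ∑ a, r h s a * liftA H S h q s a)
          = ∑ s, ∑ a, r h s a * liftA H S h p₀ s a := by
        refine Finset.sum_congr rfl fun s _ => Finset.sum_congr rfl fun a _ => by
          rw [hqA s a, hp₀Gy.2 s a]
      rw [h1']
      have h2' : Robj H S r (h+1) (liftE H S h q) ≤ Robj H S r (h+1) (liftE H S h p₀) :=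
        hp₀max (⟨hq, hqA⟩ : q ∈ Gy)
      linarith
  · -- h = H
    have hHeq : h = H := by omega
    set p₀ : Idx H S h → ℝ := Sum.elim (fun sa => ybar sa.1 sa.2) (fun _ => 0) with hp₀def
    have hnoj : ∀ j : {j : ℕ // j ∈ Finset.Icc (h+1) H}, False := by
      intro j
      have := Finset.mem_Icc.mp j.2
      omega
    have hmem : p₀ ∈ GSet H S α P h xstar := by
      refine ⟨?_, fun s => hbsum s, hbbud, fun j => (hnoj j).elim,
        fun j => (hnoj j).elim, fun j => (hnoj j).elim⟩
      intro i
      match i with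
      | Sum.inl (s, a) => exact hb0 s a
      | Sum.inr (j, _) => exact (hnoj j).elim
    have hRobj0 : ∀ q : Idx H S h → ℝ, Robj H S r (h+1) (liftE H S h q) = 0 := by
      intro q
      unfold Robj
      rw [Finset.Icc_eq_empty (by omega), Finset.sum_empty]
    refine ⟨p₀, hmem, fun s a => rfl, ?_, ?_⟩
    · rw [Qfl, if_neg hlt, cval H S h r p₀, hRobj0, add_zero, add_zero]
      exact Finset.sum_congr rfl fun s _ => Finset.sum_congr rfl fun a _ => rfl
    · intro q hq hqA
      rw [cval H S h r q, cval H S h r p₀, hRobj0, hRobj0]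
      have : (∑ s, ∑ a, r h s a * liftA H S h q s a)
          = ∑ s, ∑ a, r h s a * liftA H S h p₀ s a := by
        refine Finset.sum_congr rfl fun s _ => Finset.sum_congr rfl fun a _ => by
          rw [hqA s a]
          rfl
      rw [this]

/-- Anti-Lipschitz property of the fluid Q-function at the unique optimal solution: for
each stage `h` there is `σ > 0` with `Q_h(y*_h) − Q_h(ȳ) ≥ σ·‖y*_h − ȳ‖_∞` for every
stage-`h` action `ȳ` feasible at `x*_h`. -/
theorem stmt18 (H S : ℕ) (hH : 1 ≤ H) (hS : 1 ≤ S) (α : ℝ) (hα : α ∈ Set.Ioo (0 : ℝ) 1)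
    (P : ℕ → Fin S → Fin 2 → Fin S → ℝ)
    (hP0 : ∀ h ∈ Finset.Ico 1 H, ∀ s a s', 0 ≤ P h s a s')
    (hP1 : ∀ h ∈ Finset.Ico 1 H, ∀ s a, ∑ s', P h s a s' = 1)
    (r : ℕ → Fin S → Fin 2 → ℝ)
    (xini : Fin S → ℝ) (hx0 : ∀ s, 0 ≤ xini s) (hx1 : ∑ s, xini s = 1)
    (ystar : ℕ → Fin S → Fin 2 → ℝ)
    (hfeas : Feas H S α P 1 xini ystar)
    (hopt : ∀ y, Feas H S α P 1 xini y → Robj H S r 1 y ≤ Robj H S r 1 ystar)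
    (huniq : ∀ y, Feas H S α P 1 xini y → Robj H S r 1 y = Robj H S r 1 ystar →
      ∀ h' ∈ Finset.Icc 1 H, y h' = ystar h') :
    ∀ h ∈ Finset.Icc 1 H, ∃ σ : ℝ, 0 < σ ∧
      ∀ ybar : Fin S → Fin 2 → ℝ,
        (∀ s a, 0 ≤ ybar s a) →
        (∀ s, ybar s 0 + ybar s 1 = ystar h s 0 + ystar h s 1) →
        (∑ s, ybar s 1 = α) →
        σ * ‖ystar h - ybar‖ ≤
          Qfl H S α P r h (ystar h) - Qfl H S α P r h ybar := by
  classical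
  intro h hhI
  rw [Finset.mem_Icc] at hhI
  obtain ⟨h1, hle⟩ := hhI
  have hmemh : h ∈ Finset.Icc 1 H := Finset.mem_Icc.mpr ⟨h1, hle⟩
  set xstar : Fin S → ℝ := fun s => ystar h s 0 + ystar h s 1 with hxstardef
  have hxs1 : ∑ s, xstar s = 1 :=
    mass_lemma H S α P hP1 1 le_rfl xini hx1 ystar hfeas h h1 hle
  have hxs0 : ∀ s, 0 ≤ xstar s := by
    intro s
    have q0 := hfeas.1 h hmemh s 0
    have q1 := hfeas.1 h hmemh s 1
    show (0:ℝ) ≤ ystar h s 0 + ystar h s 1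
    linarith
  set pstar : Idx H S h → ℝ := Sum.elim (fun sa => ystar h sa.1 sa.2)
    (fun jsa => ystar (jsa.1 : ℕ) jsa.2.1 jsa.2.2) with hpstardef
  have hpsmem : pstar ∈ GSet H S α P h xstar := by
    refine ⟨?_, fun s => rfl, hfeas.2.1 h hmemh, ?_, ?_, ?_⟩
    · intro i
      match i with
      | Sum.inl (s, a) => exact hfeas.1 h hmemh s a
      | Sum.inr (j, (s, a)) =>
        have := Finset.mem_Icc.mp j.2
        exact hfeas.1 (j:ℕ) (Finset.mem_Icc.mpr ⟨by omega, this.2⟩) s a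
    · intro j
      have := Finset.mem_Icc.mp j.2
      exact hfeas.2.1 (j:ℕ) (Finset.mem_Icc.mpr ⟨by omega, this.2⟩)
    · intro j hj s'
      have hj2 := Finset.mem_Icc.mp j.2
      show ystar (j:ℕ) s' 0 + ystar (j:ℕ) s' 1 = ∑ s, ∑ a, ystar h s a * P h s a s'
      rw [hj]
      exact hfeas.2.2.2 h (Finset.mem_Ico.mpr ⟨h1, by omega⟩) s'
    · intro j j' hj' s'
      have hj2 := Finset.mem_Icc.mp j.2
      have hj'2 := Finset.mem_Icc.mp j'.2
      show ystar (j':ℕ) s' 0 + ystar (j':ℕ) s' 1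
        = ∑ s, ∑ a, ystar (j:ℕ) s a * P (j:ℕ) s a s'
      rw [hj']
      exact hfeas.2.2.2 (j:ℕ) (Finset.mem_Ico.mpr ⟨by omega, by omega⟩) s'
  -- transfer optimality and uniqueness to the lifted LP
  have hkey : ∀ p ∈ GSet H S α P h xstar,
      cmap (wgt H S h r) p ≤ cmap (wgt H S h r) pstar ∧
      (cmap (wgt H S h r) p = cmap (wgt H S h r) pstar → p = pstar) := by
    intro p hp
    set z : ℕ → Fin S → Fin 2 → ℝ := fun h' =>
      if h' < h then ystar h' else if h' = h then (fun s a => liftA H S h p s a)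
      else liftE H S h p h' with hzdef
    have hw : h < H → Feas H S α P (h+1)
        (fun s' => ∑ s, ∑ a, liftA H S h p s a * P h s a s') (liftE H S h p) :=
      fun hlt => ((GSet_iff H S α P h hlt xstar p).mp hp).2.2.2
    have hz : Feas H S α P 1 xini z := by
      refine splice H S α P xini ystar hfeas h h1 hle (fun s a => liftA H S h p s a)
        (fun s a => hp.1 (Sum.inl (s, a))) (fun s => hp.2.1 s) hp.2.2.1 (liftE H S h p) hw
    have hzsplit := robj_split H S r h h1 hle z
    have hyssplit := robj_split H S r h h1 hle ystar
    have hfront : (∑ h' ∈ Finset.Icc 1 (h-1), ∑ s, ∑ a, r h' s a * z h' s a)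
        = ∑ h' ∈ Finset.Icc 1 (h-1), ∑ s, ∑ a, r h' s a * ystar h' s a := by
      refine Finset.sum_congr rfl fun h' hh' => ?_
      rw [Finset.mem_Icc] at hh'
      have : h' < h := by omega
      rw [hzdef]
      simp only [if_pos this]
    have hstage : (∑ s, ∑ a, r h s a * z h s a)
        = ∑ s, ∑ a, r h s a * liftA H S h p s a := by
      refine Finset.sum_congr rfl fun s _ => Finset.sum_congr rfl fun a _ => ?_
      rw [hzdef]
      simp only [lt_irrefl, if_false, eq_self_iff_true, if_true]
    have htail : Robj H S r (h+1) z = Robj H S r (h+1) (liftE H S h p) := by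
      refine robj_congr H S r (h+1) z (liftE H S h p) ?_
      intro h' hh' s a
      rw [Finset.mem_Icc] at hh'
      have c1 : ¬ h' < h := by omega
      have c2 : h' ≠ h := by omega
      rw [hzdef]
      simp only [if_neg c1, if_neg c2]
    have hpstail : Robj H S r (h+1) ystar = Robj H S r (h+1) (liftE H S h pstar) := by
      refine robj_congr H S r (h+1) ystar (liftE H S h pstar) ?_
      intro h' hh' s a
      rw [liftE, dif_pos hh']
      rfl
    have hcp : cmap (wgt H S h r) p = Robj H S r 1 z
        - ∑ h' ∈ Finset.Icc 1 (h-1), ∑ s, ∑ a, r h' s a * ystar h' s a := by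
      rw [cval H S h r p, hzsplit, hfront, hstage, htail]
      ring
    have hcps : cmap (wgt H S h r) pstar = Robj H S r 1 ystar
        - ∑ h' ∈ Finset.Icc 1 (h-1), ∑ s, ∑ a, r h' s a * ystar h' s a := by
      rw [cval H S h r pstar, hyssplit, hpstail]
      have : (∑ s, ∑ a, r h s a * liftA H S h pstar s a)
          = ∑ s, ∑ a, r h s a * ystar h s a :=
        Finset.sum_congr rfl fun s _ => Finset.sum_congr rfl fun a _ => rfl
      rw [this]
      ring
    constructor
    · have := hopt z hz
      rw [hcp, hcps]
      linarith
    · intro hceq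
      have hReq : Robj H S r 1 z = Robj H S r 1 ystar := by
        rw [hcp, hcps] at hceq
        linarith
      have hzeq := huniq z hz hReq
      funext i
      match i with
      | Sum.inl (s, a) =>
        have := hzeq h hmemh
        have h2 : z h s a = ystar h s a := by rw [this]
        rw [hzdef] at h2
        simp only [lt_irrefl, if_false, eq_self_iff_true, if_true] at h2
        exact h2
      | Sum.inr (j, (s, a)) =>
        have hj2 := Finset.mem_Icc.mp j.2
        have := hzeq (j:ℕ) (Finset.mem_Icc.mpr ⟨by omega, hj2.2⟩)
        have h2 : z (j:ℕ) s a = ystar (j:ℕ) s a := by rw [this]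
        rw [hzdef] at h2
        have c1 : ¬ (j:ℕ) < h := by omega
        have c2 : (j:ℕ) ≠ h := by omega
        simp only [if_neg c1, if_neg c2] at h2
        show p (Sum.inr (j, (s, a))) = ystar (j:ℕ) s a
        rw [← h2, liftE, dif_pos j.2, Subtype.coe_eta]
  obtain ⟨σ, hσ, hsharp⟩ := lp_sharp (GSet H S α P h xstar)
    (GSet_compact H S α P hP1 h h1 hle xstar hxs1)
    (fun p hp => hp.1) pstar hpsmem
    (GSet_haff H S α P h xstar pstar hpsmem)
    (cmap (wgt H S h r))
    (fun p hp => (hkey p hp).1)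
    (fun p hp => (hkey p hp).2)
  refine ⟨σ, hσ, ?_⟩
  intro ybar hb0 hbsum hbbud
  obtain ⟨p₀, hp₀G, hp₀A, hp₀Q, _⟩ :=
    exists_opt H S α hα P hP0 hP1 r h h1 hle xstar hxs0 hxs1 ybar hb0
      (fun s => hbsum s) hbbud
  obtain ⟨ps', hps'G, hps'A, hps'Q, hps'max⟩ :=
    exists_opt H S α hα P hP0 hP1 r h h1 hle xstar hxs0 hxs1 (ystar h)
      (fun s a => hfeas.1 h hmemh s a) (fun s => rfl) (hfeas.2.1 h hmemh)
  have hQstar : Qfl H S α P r h (ystar h) = cmap (wgt H S h r) pstar := by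
    have hle1 := (hkey ps' hps'G).1
    have hge := hps'max pstar hpsmem (fun s a => rfl)
    rw [hps'Q]
    linarith
  have hmain := hsharp p₀ hp₀G
  have hnorm : ‖ystar h - ybar‖ ≤ ‖pstar - p₀‖ := by
    refine pi_norm_le_iff_of_nonneg (norm_nonneg _) |>.mpr fun s => ?_
    refine pi_norm_le_iff_of_nonneg (norm_nonneg _) |>.mpr fun a => ?_
    have heq : (ystar h - ybar) s a = (pstar - p₀) (Sum.inl (s, a)) := by
      simp only [Pi.sub_apply]
      rw [← hp₀A s a]
      rfl
    show ‖(ystar h - ybar) s a‖ ≤ ‖pstar - p₀‖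
    rw [heq]
    exact norm_le_pi_norm _ _
  have hstep : σ * ‖ystar h - ybar‖ ≤ σ * ‖pstar - p₀‖ :=
    mul_le_mul_of_nonneg_left hnorm hσ.le
  rw [hQstar, hp₀Q]
  linarith
end
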